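/- arXiv:math/0412552 — 9 statements merged into one kernel-verified Lean document; each statement's English description precedes it below -/
import Mathlib

section
/- Let Δ be a nonempty simplicial complex of finite dimension. Then Δ is pure if and only if (Lk_Δ(δ))′ = Lk_{Δ′}(δ) for every nonempty simplex δ ∈ Δ, where each ′ denotes the codimension-one skeleton of the respective complex with respect to its own dimension. -/
namespace SimpCx

variable {V : Type*}

/-- An (augmented abstract) simplicial complex on the vertex type `V`:
a set of finite subsets (the simplices) closed under taking subsets. -/
def IsComplex (K : Set (Finset V)) : Prop :=
  ∀ σ ∈ K, ∀ τ : Finset V, τ ⊆ σ → τ ∈ K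

/-- The simplicial join of two complexes (on disjoint vertex sets). -/
def sJoin [DecidableEq V] (K L : Set (Finset V)) : Set (Finset V) :=
  {τ | ∃ σ₁ ∈ K, ∃ σ₂ ∈ L, τ = σ₁ ∪ σ₂}

/-- The link of a finite vertex set `σ` in `K`. -/
def sLink [DecidableEq V] (K : Set (Finset V)) (σ : Finset V) : Set (Finset V) :=
  {τ | τ ∈ K ∧ σ ∩ τ = ∅ ∧ σ ∪ τ ∈ K}

/-- The closed star of `σ` in `K`. -/
def sStar [DecidableEq V] (K : Set (Finset V)) (σ : Finset V) : Set (Finset V) :=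
  {τ | τ ∈ K ∧ σ ∪ τ ∈ K}

/-- The contrastar of `σ` in `K`. -/
def sCost (K : Set (Finset V)) (σ : Finset V) : Set (Finset V) :=
  {τ | τ ∈ K ∧ ¬ σ ⊆ τ}

/-- `K` has dimension `n` (`dim σ = card σ - 1`): every simplex has at most
`n + 1` vertices, and some simplex has exactly `n + 1` vertices. -/
def HasDim (K : Set (Finset V)) (n : ℤ) : Prop :=
  (∀ σ ∈ K, (σ.card : ℤ) ≤ n + 1) ∧ ∃ σ ∈ K, (σ.card : ℤ) = n + 1

/-- The `(n-1)`-skeleton `{σ ∈ K | card σ ≤ n}`; this is the codimension-one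
skeleton `K′` when `n = dim K`. -/
def skel (K : Set (Finset V)) (n : ℤ) : Set (Finset V) :=
  {σ | σ ∈ K ∧ (σ.card : ℤ) ≤ n}

/-- `σ` is an inclusion-maximal simplex of `K`. -/
def IsMaxFace (K : Set (Finset V)) (σ : Finset V) : Prop :=
  σ ∈ K ∧ ∀ τ ∈ K, σ ⊆ τ → τ = σ

/-- A complex of dimension `n` is pure if every maximal simplex has dimension `n`. -/
def IsPure (K : Set (Finset V)) (n : ℤ) : Prop :=
  ∀ σ : Finset V, IsMaxFace K σ → (σ.card : ℤ) = n + 1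

/-- `K` is locally finite: every vertex of `K` lies in only finitely many simplices. -/
def SLocallyFinite (K : Set (Finset V)) : Prop :=
  ∀ v : V, ({v} : Finset V) ∈ K → {σ ∈ K | v ∈ σ}.Finite

/-- `K` is connected: `K` is nonempty and any two vertices of `K` are joined by a
finite chain of vertices in which every two consecutive vertices span a 1-simplex. -/
def SConnected [DecidableEq V] (K : Set (Finset V)) : Prop :=
  K.Nonempty ∧ ∀ u w : V, ({u} : Finset V) ∈ K → ({w} : Finset V) ∈ K →
    ∃ m : ℕ, ∃ p : Fin (m + 1) → V, p 0 = u ∧ p (Fin.last m) = w ∧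
      ∀ i : Fin m, ({p i.castSucc, p i.succ} : Finset V) ∈ K

/-- A set has at most two elements. -/
def AtMostTwo {α : Type*} (S : Set α) : Prop :=
  ∀ a ∈ S, ∀ b ∈ S, ∀ c ∈ S, a = b ∨ a = c ∨ b = c

/-- Two maximal simplices `σ`, `τ` of `K` are strongly connected: there is a chain
`σ = δ₀, δ₁, …, δ_q = τ` of maximal simplices with
`card (δᵢ ∩ δᵢ₊₁) = (max_j card δⱼ) - 1` for consecutive members. -/
def StronglyConnectedPair [DecidableEq V] (K : Set (Finset V)) (σ τ : Finset V) : Prop :=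
  ∃ q : ℕ, ∃ δ : Fin (q + 1) → Finset V,
    (∀ i, IsMaxFace K (δ i)) ∧ δ 0 = σ ∧ δ (Fin.last q) = τ ∧
    ∀ i : Fin q, (δ i.castSucc ∩ δ i.succ).card + 1 =
      Finset.univ.sup (fun j : Fin (q + 1) => (δ j).card)

/-- `K` is strongly connected: every two maximal simplices are strongly connected. -/
def StronglyConnected [DecidableEq V] (K : Set (Finset V)) : Prop :=
  ∀ σ τ : Finset V, IsMaxFace K σ → IsMaxFace K τ → StronglyConnectedPair K σ τ

/-- `σ` is a submaximal face of `K`: it is contained in a maximal simplex with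
exactly one more vertex. -/
def Submaximal (K : Set (Finset V)) (σ : Finset V) : Prop :=
  ∃ τ : Finset V, IsMaxFace K τ ∧ σ ⊆ τ ∧ τ.card = σ.card + 1

/-- Every submaximal face of `K` lies in at most two maximal faces. -/
def AtMostTwoMax (K : Set (Finset V)) : Prop :=
  ∀ σ : Finset V, Submaximal K σ → AtMostTwo {τ | IsMaxFace K τ ∧ σ ⊆ τ}

/-- Every submaximal face of `K` lies in exactly two maximal faces. -/
def ExactlyTwoMax (K : Set (Finset V)) : Prop :=
  ∀ σ : Finset V, Submaximal K σ →
    ∃ τ₁ τ₂ : Finset V, τ₁ ≠ τ₂ ∧ {τ | IsMaxFace K τ ∧ σ ⊆ τ} = {τ₁, τ₂}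

/-- An `n`-pseudomanifold: a locally finite pure complex of dimension `n` in which
every `(n-1)`-simplex lies in at most two `n`-simplices and any two `n`-simplices
are connected by a chain of `n`-simplices, consecutive ones meeting in an
`(n-1)`-simplex. -/
def IsPseudoManifold [DecidableEq V] (K : Set (Finset V)) (n : ℤ) : Prop :=
  IsComplex K ∧ SLocallyFinite K ∧ HasDim K n ∧ IsPure K n ∧
  (∀ σ ∈ K, (σ.card : ℤ) = n →
      AtMostTwo {τ | τ ∈ K ∧ σ ⊆ τ ∧ (τ.card : ℤ) = n + 1}) ∧
  (∀ s ∈ K, ∀ s' ∈ K, (s.card : ℤ) = n + 1 → (s'.card : ℤ) = n + 1 →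
      ∃ m : ℕ, ∃ c : Fin (m + 1) → Finset V,
        c 0 = s ∧ c (Fin.last m) = s' ∧ (∀ i, c i ∈ K ∧ ((c i).card : ℤ) = n + 1) ∧
        ∀ i : Fin m, ((c i.castSucc ∩ c i.succ).card : ℤ) = n)

/-- A quasi-`n`-manifold: a locally finite pure complex of dimension `n` in which
every `(n-1)`-simplex lies in at most two `n`-simplices and the link of every
simplex is connected whenever that link has dimension at least `1`. -/
def IsQuasiManifold [DecidableEq V] (K : Set (Finset V)) (n : ℤ) : Prop :=
  IsComplex K ∧ SLocallyFinite K ∧ HasDim K n ∧ IsPure K n ∧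
  (∀ σ ∈ K, (σ.card : ℤ) = n →
      AtMostTwo {τ | τ ∈ K ∧ σ ⊆ τ ∧ (τ.card : ℤ) = n + 1}) ∧
  (∀ σ ∈ K, (∃ τ ∈ sLink K σ, 2 ≤ τ.card) → SConnected (sLink K σ))

/-- The Stanley–Reisner ideal of `K` in `A[x_w : w ∈ W]`, generated by the
squarefree monomials `∏_{v ∈ δ} x_v` over the finite subsets `δ ∉ K`. -/
noncomputable def SRideal (A : Type*) [CommRing A] {W : Type*} (K : Set (Finset W)) :
    Ideal (MvPolynomial W A) :=
  Ideal.span {m : MvPolynomial W A | ∃ δ : Finset W, δ ∉ K ∧ m = ∏ v ∈ δ, MvPolynomial.X v}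

/-- The simplicial join of complexes on two disjoint vertex types, as a complex
on the sum type. -/
def sJoinSum {V₁ V₂ : Type*} (K : Set (Finset V₁)) (L : Set (Finset V₂)) :
    Set (Finset (V₁ ⊕ V₂)) :=
  {τ | ∃ σ₁ ∈ K, ∃ σ₂ ∈ L, τ = σ₁.disjSum σ₂}

end SimpCx

open SimpCx

private lemma exists_max_face_aux {V : Type*} (K : Set (Finset V)) (n : ℤ)
    (hd : ∀ σ ∈ K, (σ.card : ℤ) ≤ n + 1)
    {δ : Finset V} (hδ : δ ∈ K) :
    ∃ τ, IsMaxFace K τ ∧ δ ⊆ τ := by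
  set S : Set ℕ := {c | ∃ τ ∈ K, δ ⊆ τ ∧ τ.card = c} with hS
  have hSne : S.Nonempty := ⟨δ.card, δ, hδ, subset_rfl, rfl⟩
  have hbdd : BddAbove S := by
    refine ⟨(n + 1).toNat, ?_⟩
    rintro c ⟨τ, hτ, -, rfl⟩
    have := hd τ hτ
    omega
  obtain ⟨τ, hτK, hδτ, hcard⟩ := Nat.sSup_mem hSne hbdd
  refine ⟨τ, ⟨hτK, ?_⟩, hδτ⟩
  intro ρ hρ hsub
  have h1 : ρ.card ∈ S := ⟨ρ, hρ, hδτ.trans hsub, rfl⟩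
  have h2 : ρ.card ≤ sSup S := le_csSup hbdd h1
  exact (Finset.eq_of_subset_of_card_le hsub (by omega)).symm

/-- a nonempty finite-dimensional complex is pure iff the
codimension-one skeleton of each link of a nonempty simplex is the link in the
codimension-one skeleton. -/
theorem statement5 {V : Type*} [DecidableEq V] (K : Set (Finset V)) (n : ℤ)
    (hK : IsComplex K) (hne : K.Nonempty) (hd : HasDim K n) :
    IsPure K n ↔
      ∀ δ ∈ K, δ ≠ (∅ : Finset V) →
        ∀ m : ℤ, HasDim (sLink K δ) m →
          skel (sLink K δ) m = sLink (skel K n) δ := by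
  have hempty : (∅ : Finset V) ∈ K := by
    obtain ⟨σ, hσ⟩ := hne
    exact hK σ hσ ∅ (Finset.empty_subset σ)
  constructor
  · intro hpure δ hδ hδne m hm
    have hδpos : 1 ≤ δ.card := Finset.card_pos.mpr (Finset.nonempty_iff_ne_empty.mpr hδne)
    -- extend δ to a maximal face, of card n+1 by purity
    obtain ⟨τ, hτmax, hδτ⟩ := exists_max_face_aux K n hd.1 hδ
    have hτcard : (τ.card : ℤ) = n + 1 := hpure τ hτmax
    -- τ \ δ is in the link with card n+1-card δ
    have hρlink : τ \ δ ∈ sLink K δ := by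
      refine ⟨hK τ hτmax.1 _ (Finset.sdiff_subset), ?_, ?_⟩
      · exact Finset.inter_sdiff_self δ τ
      · rw [Finset.union_sdiff_of_subset hδτ]; exact hτmax.1
    have hρcard : ((τ \ δ).card : ℤ) = n + 1 - δ.card := by
      have := Finset.card_sdiff_of_subset hδτ
      have := Finset.card_le_card hδτ
      omega
    -- every link member has card ≤ n+1-card δ
    have hub : ∀ ρ ∈ sLink K δ, (ρ.card : ℤ) ≤ n + 1 - δ.card := by
      rintro ρ ⟨hρK, hdisj, hun⟩
      have h1 := hd.1 _ hun
      have h2 : (δ ∪ ρ).card = δ.card + ρ.card :=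
        Finset.card_union_of_disjoint (Finset.disjoint_iff_inter_eq_empty.mpr hdisj)
      omega
    -- hence m = n - card δ
    have hmval : m = n - δ.card := by
      obtain ⟨ρ₀, hρ₀, hρ₀c⟩ := hm.2
      have h1 := hub ρ₀ hρ₀
      have h2 := hm.1 _ hρlink
      omega
    ext ρ
    constructor
    · rintro ⟨⟨hρK, hdisj, hun⟩, hc⟩
      have h2 : (δ ∪ ρ).card = δ.card + ρ.card :=
        Finset.card_union_of_disjoint (Finset.disjoint_iff_inter_eq_empty.mpr hdisj)
      exact ⟨⟨hρK, by omega⟩, hdisj, hun, by omega⟩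
    · rintro ⟨⟨hρK, hρc⟩, hdisj, hun, hunc⟩
      have h2 : (δ ∪ ρ).card = δ.card + ρ.card :=
        Finset.card_union_of_disjoint (Finset.disjoint_iff_inter_eq_empty.mpr hdisj)
      exact ⟨⟨hρK, hdisj, hun⟩, by omega⟩
  · intro h σ hσmax
    by_contra hners
    have hle : (σ.card : ℤ) ≤ n := by
      have := hd.1 σ hσmax.1
      omega
    have hσne : σ ≠ ∅ := by
      rintro rfl
      obtain ⟨w, hw, hwc⟩ := hd.2
      have := hσmax.2 w hw (Finset.empty_subset w)
      subst this
      simp at hwc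
      omega
    have hσpos : 1 ≤ σ.card := Finset.card_pos.mpr (Finset.nonempty_iff_ne_empty.mpr hσne)
    -- the link of σ is {∅}, of dimension -1
    have hlink : ∀ ρ ∈ sLink K σ, ρ = ∅ := by
      rintro ρ ⟨hρK, hdisj, hun⟩
      have hequ : σ ∪ ρ = σ := hσmax.2 _ hun Finset.subset_union_left
      have hsub : ρ ⊆ σ := by
        intro x hx
        have : x ∈ σ ∪ ρ := Finset.mem_union_right _ hx
        rwa [hequ] at this
      have : σ ∩ ρ = ρ := Finset.inter_eq_right.mpr hsub
      rw [← this, hdisj]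
    have hdim : HasDim (sLink K σ) (-1) := by
      constructor
      · intro ρ hρ
        rw [hlink ρ hρ]
        simp
      · refine ⟨∅, ⟨hempty, ?_, ?_⟩, by simp⟩
        · simp
        · simpa using hσmax.1
    have heq := h σ hσmax.1 hσne (-1) hdim
    have hmem : (∅ : Finset V) ∈ sLink (skel K n) σ := by
      refine ⟨⟨hempty, by simp; omega⟩, by simp, ?_⟩
      exact ⟨by simpa using hσmax.1, by simpa using hle⟩
    rw [← heq] at hmem
    have := hmem.2
    simp at this
end

section
/- Let Δ be a nonempty simplicial complex of finite dimension n and let δ be a nonempty finite vertex set. Then: (1) (cost_Δ(δ))′ = cost_{Δ′}(δ) if and only if dim cost_Δ(δ) = n; (2) cost_Δ(δ) = cost_{Δ′}(δ) if and only if dim cost_Δ(δ) = n − 1; here each ′ is the codimension-one skeleton of the respective complex with respect to its own dimension. Moreover it is always true that n − 1 ≤ dim cost_Δ(τ) ≤ dim cost_Δ(δ) ≤ n for all nonempty τ ⊆ δ. -/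
open SimpCx

/-- skeleta of contrastars and dimensions of contrastars. -/
theorem statement9 {V : Type*} [DecidableEq V] (K : Set (Finset V)) (n : ℤ)
    (δ : Finset V) (hK : IsComplex K) (hne : K.Nonempty) (hd : HasDim K n)
    (hδ : δ ≠ (∅ : Finset V)) :
    (∀ m : ℤ, HasDim (sCost K δ) m →
        ((skel (sCost K δ) m = sCost (skel K n) δ ↔ m = n) ∧
         (sCost K δ = sCost (skel K n) δ ↔ m = n - 1))) ∧
    (∀ τ : Finset V, τ ≠ (∅ : Finset V) → τ ⊆ δ →
        ∀ m m' : ℤ, HasDim (sCost K τ) m → HasDim (sCost K δ) m' →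
          n - 1 ≤ m ∧ m ≤ m' ∧ m' ≤ n) := by

  have key : ∀ τ : Finset V, τ ≠ (∅ : Finset V) → ∀ m : ℤ, HasDim (sCost K τ) m →
      n - 1 ≤ m ∧ m ≤ n := by
    intro τ hτ m hm
    constructor
    · obtain ⟨σ, hσK, hσc⟩ := hd.2
      obtain ⟨v, hv⟩ := Finset.nonempty_iff_ne_empty.mpr hτ
      have h1 : σ.erase v ∈ sCost K τ := by
        refine ⟨hK σ hσK _ (Finset.erase_subset v σ), ?_⟩
        intro hsub
        exact (Finset.notMem_erase v σ) (hsub hv)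
      have h2 := hm.1 _ h1
      by_cases hvσ : v ∈ σ
      · have h3 := Finset.card_erase_of_mem hvσ
        have h4 : 1 ≤ σ.card := Finset.card_pos.mpr ⟨v, hvσ⟩
        omega
      · rw [Finset.erase_eq_of_notMem hvσ] at h2
        omega
    · obtain ⟨σ, hσ, hc⟩ := hm.2
      have := hd.1 σ hσ.1
      omega
  constructor
  · intro m hm
    have hb := key δ hδ m hm
    constructor
    · constructor
      · intro heq
        by_contra hmn
        obtain ⟨σ, hσ, hc⟩ := hm.2
        have hrhs : σ ∈ sCost (skel K n) δ := ⟨⟨hσ.1, by omega⟩, hσ.2⟩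
        rw [← heq] at hrhs
        have := hrhs.2
        omega
      · intro hmn
        subst hmn
        ext σ
        simp only [sCost, skel, Set.mem_setOf_eq]
        tauto
    · constructor
      · intro heq
        obtain ⟨σ, hσ, hc⟩ := hm.2
        have hrhs : σ ∈ sCost (skel K n) δ := heq ▸ hσ
        have := hrhs.1.2
        omega
      · intro hmn
        ext σ
        simp only [sCost, skel, Set.mem_setOf_eq]
        constructor
        · rintro ⟨h1, h2⟩
          exact ⟨⟨h1, by have := hm.1 σ ⟨h1, h2⟩; omega⟩, h2⟩
        · rintro ⟨⟨h1, _⟩, h2⟩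
          exact ⟨h1, h2⟩
  · intro τ hτ hsub m m' hmτ hmδ
    refine ⟨(key τ hτ m hmτ).1, ?_, (key δ hδ m' hmδ).2⟩
    obtain ⟨σ, hσ, hc⟩ := hmτ.2
    have hσδ : σ ∈ sCost K δ := ⟨hσ.1, fun h => hσ.2 (hsub.trans h)⟩
    have := hmδ.1 σ hσδ
    omega
end

section
/- Let Δ be a nonempty simplicial complex of finite dimension n. Then dim cost_Δ({v}) = n − 1 for every vertex v of Δ if and only if Δ has only finitely many vertices and Δ is the full complex on its vertex set, i.e. Δ consists of all subsets of its (finite) vertex set. -/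
open SimpCx

/-- all vertex contrastars have dimension `n - 1` iff the complex is
the full complex on a finite vertex set. -/
theorem statement11 {V : Type*} [DecidableEq V] (K : Set (Finset V)) (n : ℤ)
    (hK : IsComplex K) (hne : K.Nonempty) (hd : HasDim K n) :
    (∀ v : V, ({v} : Finset V) ∈ K → HasDim (sCost K {v}) (n - 1)) ↔
      ({v : V | ({v} : Finset V) ∈ K}.Finite ∧
        K = {σ : Finset V | ∀ v ∈ σ, ({v} : Finset V) ∈ K}) := by
  constructor
  · intro h
    obtain ⟨hub, σ, hσK, hσcard⟩ := hd
    have hall : ∀ v : V, ({v} : Finset V) ∈ K → v ∈ σ := by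
      intro v hv
      by_contra hvσ
      have hmem : σ ∈ sCost K {v} := ⟨hσK, by simp [hvσ]⟩
      have := (h v hv).1 σ hmem
      omega
    refine ⟨σ.finite_toSet.subset (fun v hv => hall v hv), ?_⟩
    ext τ
    simp only [Set.mem_setOf_eq]
    constructor
    · intro hτ v hv
      exact hK τ hτ {v} (Finset.singleton_subset_iff.mpr hv)
    · intro hτ
      exact hK σ hσK τ (fun v hv => hall v (hτ v hv))
  · rintro ⟨hfin, hfull⟩
    set S := hfin.toFinset with hS
    have hSmem : ∀ v : V, v ∈ S ↔ ({v} : Finset V) ∈ K := by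
      intro v; simp [hS]
    have hSK : S ∈ K := by
      rw [hfull]; intro v hv; exact (hSmem v).mp hv
    have hsub : ∀ τ ∈ K, τ ⊆ S := by
      intro τ hτ v hv
      have h2 : ∀ v ∈ τ, ({v} : Finset V) ∈ K := by
        have := hfull ▸ hτ; exact this
      exact (hSmem v).mpr (h2 v hv)
    obtain ⟨hub, σ, hσK, hσcard⟩ := hd
    have hScard : (S.card : ℤ) = n + 1 := by
      have h1 := hub S hSK
      have h2 := Finset.card_le_card (hsub σ hσK)
      omega
    intro v hv
    have hvS : v ∈ S := (hSmem v).mpr hv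
    have hec : (S.erase v).card = S.card - 1 := Finset.card_erase_of_mem hvS
    have hSpos : 1 ≤ S.card := Finset.card_pos.mpr ⟨v, hvS⟩
    constructor
    · rintro τ ⟨hτK, hvτ⟩
      have hτe : τ ⊆ S.erase v := by
        intro w hw
        refine Finset.mem_erase.mpr ⟨?_, hsub τ hτK hw⟩
        rintro rfl; exact hvτ (Finset.singleton_subset_iff.mpr hw)
      have h3 := Finset.card_le_card hτe
      omega
    · refine ⟨S.erase v, ⟨hK S hSK _ (Finset.erase_subset _ _), ?_⟩, ?_⟩
      · simp
      · omega
end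

section
/- Let k be a field, V₁ and V₂ vertex types, and Δ₁, Δ₂ nonempty simplicial complexes on V₁ and V₂ respectively. Regarding the join Δ₁ ∗ Δ₂ as a simplicial complex on V₁ ⊕ V₂, there is an isomorphism of k-algebras k⟨Δ₁ ∗ Δ₂⟩ ≅ k⟨Δ₁⟩ ⊗_k k⟨Δ₂⟩, induced by the canonical isomorphism of polynomial rings MvPolynomial (V₁ ⊕ V₂) k ≅ (MvPolynomial V₁ k) ⊗_k (MvPolynomial V₂ k) (sending x_{inl v} to x_v ⊗ 1 and x_{inr w} to 1 ⊗ x_w). -/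
set_option maxHeartbeats 1000000


open SimpCx

open scoped TensorProduct

section Proof

open MvPolynomial

variable {V₁ V₂ : Type*} (k : Type*) [Field k]
variable (K : Set (Finset V₁)) (L : Set (Finset V₂))

/-- generator of the SR ideal is killed by mk -/
theorem mk_gen_zero {W : Type*} (M : Set (Finset W)) {δ : Finset W} (h : δ ∉ M) :
    Ideal.Quotient.mk (SRideal k M) (∏ v ∈ δ, X v) = 0 :=
  Ideal.Quotient.eq_zero_iff_mem.2 (Ideal.subset_span ⟨δ, h, rfl⟩)

theorem disjSum_not_mem {δ₁ : Finset V₁} (h : δ₁ ∉ K) (σ₂ : Finset V₂) :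
    δ₁.disjSum σ₂ ∉ sJoinSum K L := by
  rintro ⟨τ₁, hτ₁, τ₂, hτ₂, hEq⟩
  have : τ₁ = δ₁ := by
    have := congrArg Finset.toLeft hEq
    simpa using this.symm
  exact h (this ▸ hτ₁)

theorem disjSum_not_mem' (σ₁ : Finset V₁) {δ₂ : Finset V₂} (h : δ₂ ∉ L) :
    σ₁.disjSum δ₂ ∉ sJoinSum K L := by
  rintro ⟨τ₁, hτ₁, τ₂, hτ₂, hEq⟩
  have : τ₂ = δ₂ := by
    have := congrArg Finset.toRight hEq
    simpa using this.symm
  exact h (this ▸ hτ₂)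

noncomputable def fwdPoly : MvPolynomial (V₁ ⊕ V₂) k →ₐ[k]
    ((MvPolynomial V₁ k ⧸ SRideal k K) ⊗[k] (MvPolynomial V₂ k ⧸ SRideal k L)) :=
  aeval (Sum.elim
    (fun v => (Ideal.Quotient.mk (SRideal k K) (X v)) ⊗ₜ[k] 1)
    (fun w => 1 ⊗ₜ[k] (Ideal.Quotient.mk (SRideal k L) (X w))))

theorem prod_tmul_one {R A B : Type*} [CommSemiring R] [CommSemiring A] [CommSemiring B]
    [Algebra R A] [Algebra R B] {ι : Type*} (s : Finset ι) (f : ι → A) :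
    (∏ i ∈ s, (f i ⊗ₜ[R] (1 : B))) = (∏ i ∈ s, f i) ⊗ₜ[R] 1 := by
  induction s using Finset.cons_induction with
  | empty => simp [Algebra.TensorProduct.one_def]
  | cons a s ha ih => simp [Finset.prod_cons, ih, Algebra.TensorProduct.tmul_mul_tmul]

theorem one_tmul_prod {R A B : Type*} [CommSemiring R] [CommSemiring A] [CommSemiring B]
    [Algebra R A] [Algebra R B] {ι : Type*} (s : Finset ι) (f : ι → B) :
    (∏ i ∈ s, ((1 : A) ⊗ₜ[R] f i)) = (1 : A) ⊗ₜ[R] (∏ i ∈ s, f i) := by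
  induction s using Finset.cons_induction with
  | empty => simp [Algebra.TensorProduct.one_def]
  | cons a s ha ih => simp [Finset.prod_cons, ih, Algebra.TensorProduct.tmul_mul_tmul]

theorem fwdPoly_vanish : ∀ a ∈ SRideal k (sJoinSum K L), fwdPoly k K L a = 0 := by
  intro a ha
  have hker : SRideal k (sJoinSum K L) ≤ RingHom.ker (fwdPoly k K L).toRingHom := by
    refine Ideal.span_le.2 ?_
    rintro m ⟨δ, hδ, rfl⟩
    simp only [SetLike.mem_coe, RingHom.mem_ker]
    have hδ' : δ.toLeft ∉ K ∨ δ.toRight ∉ L := by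
      by_contra h
      push_neg at h
      exact hδ ⟨δ.toLeft, h.1, δ.toRight, h.2, (Finset.toLeft_disjSum_toRight (u := δ)).symm⟩
    have hrw : fwdPoly k K L (∏ v ∈ δ, X v) =
        (Ideal.Quotient.mk (SRideal k K) (∏ v ∈ δ.toLeft, X v)) ⊗ₜ[k]
        (Ideal.Quotient.mk (SRideal k L) (∏ v ∈ δ.toRight, X v)) := by
      conv_lhs => rw [← Finset.toLeft_disjSum_toRight (u := δ)]
      rw [show fwdPoly k K L (∏ v ∈ _, X v) = ∏ v ∈ _, fwdPoly k K L (X v) from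
        map_prod (fwdPoly k K L).toRingHom _ _, Finset.prod_disjSum]
      simp only [fwdPoly, aeval_X, Sum.elim_inl, Sum.elim_inr]
      rw [prod_tmul_one, one_tmul_prod, Algebra.TensorProduct.tmul_mul_tmul, one_mul, mul_one,
        map_prod, map_prod]
    show fwdPoly k K L (∏ v ∈ δ, X v) = 0
    rw [hrw]
    rcases hδ' with h | h
    · rw [mk_gen_zero k K h, TensorProduct.zero_tmul]
    · rw [mk_gen_zero k L h, TensorProduct.tmul_zero]
  exact RingHom.mem_ker.mp (hker ha)

noncomputable def Fwd : (MvPolynomial (V₁ ⊕ V₂) k ⧸ SRideal k (sJoinSum K L)) →ₐ[k]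
    ((MvPolynomial V₁ k ⧸ SRideal k K) ⊗[k] (MvPolynomial V₂ k ⧸ SRideal k L)) :=
  Ideal.Quotient.liftₐ _ (fwdPoly k K L) (fwdPoly_vanish k K L)

noncomputable def bwd₁ : (MvPolynomial V₁ k ⧸ SRideal k K) →ₐ[k]
    (MvPolynomial (V₁ ⊕ V₂) k ⧸ SRideal k (sJoinSum K L)) :=
  Ideal.Quotient.liftₐ _
    ((Ideal.Quotient.mkₐ k (SRideal k (sJoinSum K L))).comp (rename Sum.inl)) (by
      intro a ha
      refine RingHom.mem_ker.mp (Ideal.span_le.2 ?_ ha)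
      rintro m ⟨δ, hδ, rfl⟩
      simp only [SetLike.mem_coe, RingHom.mem_ker, AlgHom.comp_apply, map_prod, rename_X]
      have : (∏ v ∈ δ, (X (Sum.inl v) : MvPolynomial (V₁ ⊕ V₂) k)) =
          ∏ u ∈ δ.disjSum (∅ : Finset V₂), X u := by
        rw [Finset.prod_disjSum]; simp
      rw [← map_prod, this]
      exact mk_gen_zero k _ (disjSum_not_mem K L hδ _))

noncomputable def bwd₂ : (MvPolynomial V₂ k ⧸ SRideal k L) →ₐ[k]
    (MvPolynomial (V₁ ⊕ V₂) k ⧸ SRideal k (sJoinSum K L)) :=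
  Ideal.Quotient.liftₐ _
    ((Ideal.Quotient.mkₐ k (SRideal k (sJoinSum K L))).comp (rename Sum.inr)) (by
      intro a ha
      refine RingHom.mem_ker.mp (Ideal.span_le.2 ?_ ha)
      rintro m ⟨δ, hδ, rfl⟩
      simp only [SetLike.mem_coe, RingHom.mem_ker, AlgHom.comp_apply, map_prod, rename_X]
      have : (∏ v ∈ δ, (X (Sum.inr v) : MvPolynomial (V₁ ⊕ V₂) k)) =
          ∏ u ∈ (∅ : Finset V₁).disjSum δ, X u := by
        rw [Finset.prod_disjSum]; simp
      rw [← map_prod, this]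
      exact mk_gen_zero k _ (disjSum_not_mem' K L _ hδ))

noncomputable def Bwd : ((MvPolynomial V₁ k ⧸ SRideal k K) ⊗[k] (MvPolynomial V₂ k ⧸ SRideal k L))
    →ₐ[k] (MvPolynomial (V₁ ⊕ V₂) k ⧸ SRideal k (sJoinSum K L)) :=
  Algebra.TensorProduct.productMap (bwd₁ k K L) (bwd₂ k K L)

theorem fwd_mk_inl (v : V₁) :
    Fwd k K L (Ideal.Quotient.mk _ (X (Sum.inl v))) =
      (Ideal.Quotient.mk (SRideal k K) (X v)) ⊗ₜ[k] 1 := by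
  rw [Fwd, ← Ideal.Quotient.mkₐ_eq_mk k, ← AlgHom.comp_apply, Ideal.Quotient.liftₐ_comp]
  simp [fwdPoly]

theorem fwd_mk_inr (w : V₂) :
    Fwd k K L (Ideal.Quotient.mk _ (X (Sum.inr w))) =
      1 ⊗ₜ[k] (Ideal.Quotient.mk (SRideal k L) (X w)) := by
  rw [Fwd, ← Ideal.Quotient.mkₐ_eq_mk k, ← AlgHom.comp_apply, Ideal.Quotient.liftₐ_comp]
  simp [fwdPoly]

theorem bwd₁_mk (v : V₁) :
    bwd₁ k K L (Ideal.Quotient.mk _ (X v)) = Ideal.Quotient.mk _ (X (Sum.inl v)) := by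
  rw [bwd₁, ← Ideal.Quotient.mkₐ_eq_mk k, ← AlgHom.comp_apply, Ideal.Quotient.liftₐ_comp]
  simp

theorem bwd₂_mk (w : V₂) :
    bwd₂ k K L (Ideal.Quotient.mk _ (X w)) = Ideal.Quotient.mk _ (X (Sum.inr w)) := by
  rw [bwd₂, ← Ideal.Quotient.mkₐ_eq_mk k, ← AlgHom.comp_apply, Ideal.Quotient.liftₐ_comp]
  simp

end Proof

/-- the Stanley–Reisner ring of a join is the tensor product of the
Stanley–Reisner rings, via the canonical identification of polynomial rings. -/
theorem statement13 {V₁ V₂ : Type*} (k : Type*) [Field k]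
    (K : Set (Finset V₁)) (L : Set (Finset V₂))
    (hK : IsComplex K) (hL : IsComplex L) (hK0 : K.Nonempty) (hL0 : L.Nonempty) :
    ∃ e : (MvPolynomial (V₁ ⊕ V₂) k ⧸ SRideal k (sJoinSum K L)) ≃ₐ[k]
        ((MvPolynomial V₁ k ⧸ SRideal k K) ⊗[k] (MvPolynomial V₂ k ⧸ SRideal k L)),
      (∀ v : V₁,
        e (Ideal.Quotient.mk (SRideal k (sJoinSum K L)) (MvPolynomial.X (Sum.inl v))) =
          (Ideal.Quotient.mk (SRideal k K) (MvPolynomial.X v)) ⊗ₜ[k] 1) ∧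
      (∀ w : V₂,
        e (Ideal.Quotient.mk (SRideal k (sJoinSum K L)) (MvPolynomial.X (Sum.inr w))) =
          1 ⊗ₜ[k] (Ideal.Quotient.mk (SRideal k L) (MvPolynomial.X w))) := by
  refine ⟨AlgEquiv.ofAlgHom (Fwd k K L) (Bwd k K L) ?_ ?_, fun v => fwd_mk_inl k K L v,
    fun w => fwd_mk_inr k K L w⟩
  · refine Algebra.TensorProduct.ext ?_ ?_
    · refine Ideal.Quotient.algHom_ext k (MvPolynomial.algHom_ext fun v => ?_)
      simp only [AlgHom.comp_apply, Ideal.Quotient.mkₐ_eq_mk,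
        Algebra.TensorProduct.includeLeft_apply, AlgHom.id_apply]
      have hB : Bwd k K L ((Ideal.Quotient.mk (SRideal k K) (MvPolynomial.X v)) ⊗ₜ[k] 1) =
          Ideal.Quotient.mk _ (MvPolynomial.X (Sum.inl v)) := by
        rw [Bwd, Algebra.TensorProduct.productMap_apply_tmul, bwd₁_mk, map_one, mul_one]
      rw [hB, fwd_mk_inl]
    · refine Ideal.Quotient.algHom_ext k (MvPolynomial.algHom_ext fun w => ?_)
      simp only [AlgHom.comp_apply, Ideal.Quotient.mkₐ_eq_mk, AlgHom.restrictScalars_apply,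
        Algebra.TensorProduct.includeRight_apply, AlgHom.id_apply]
      have hB : Bwd k K L ((1 : _) ⊗ₜ[k] (Ideal.Quotient.mk (SRideal k L) (MvPolynomial.X w))) =
          Ideal.Quotient.mk _ (MvPolynomial.X (Sum.inr w)) := by
        rw [Bwd, Algebra.TensorProduct.productMap_apply_tmul, bwd₂_mk, map_one, one_mul]
      rw [hB, fwd_mk_inr]
  · refine Ideal.Quotient.algHom_ext k (MvPolynomial.algHom_ext fun u => ?_)
    cases u with
    | inl v =>
      simp only [AlgHom.comp_apply, Ideal.Quotient.mkₐ_eq_mk, AlgHom.id_apply]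
      rw [fwd_mk_inl]
      show Algebra.TensorProduct.productMap (bwd₁ k K L) (bwd₂ k K L) _ = _
      rw [Algebra.TensorProduct.productMap_apply_tmul, bwd₁_mk, map_one, mul_one]
    | inr w =>
      simp only [AlgHom.comp_apply, Ideal.Quotient.mkₐ_eq_mk, AlgHom.id_apply]
      rw [fwd_mk_inr]
      show Algebra.TensorProduct.productMap (bwd₁ k K L) (bwd₂ k K L) _ = _
      rw [Algebra.TensorProduct.productMap_apply_tmul, bwd₂_mk, map_one, one_mul]
end

section
/- Let Σ be a finite-dimensional simplicial complex such that Lk_Σ(σ) is connected for every σ ∈ Σ with dim Lk_Σ(σ) ≥ 1 (including σ = ∅, for which Lk_Σ(∅) = Σ). Then Σ is pure and strongly connected. -/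
open SimpCx


set_option linter.unusedSectionVars false
set_option linter.unusedVariables false

section Aux

variable {V : Type*} [DecidableEq V]

/-- The basic one-step relation for strong connectivity chains. -/
def Rrel (K : Set (Finset V)) (σ τ : Finset V) : Prop :=
  IsMaxFace K σ ∧ IsMaxFace K τ ∧ σ.card = τ.card ∧ (σ ∩ τ).card + 1 = σ.card

lemma link_isComplex {K : Set (Finset V)} (hK : IsComplex K) (σ : Finset V) :
    IsComplex (sLink K σ) := by
  rintro τ ⟨hτK, hdis, hun⟩ τ' hsub
  refine ⟨hK τ hτK τ' hsub, ?_, hK _ hun _ (Finset.union_subset_union_right hsub)⟩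
  have h1 : σ ∩ τ' ⊆ σ ∩ τ := Finset.inter_subset_inter (subset_refl σ) hsub
  rw [hdis] at h1
  exact Finset.subset_empty.mp h1

lemma link_link {K : Set (Finset V)} (hK : IsComplex K) {σ ρ : Finset V}
    (hρ : ρ ∈ sLink K σ) : sLink (sLink K σ) ρ = sLink K (σ ∪ ρ) := by
  obtain ⟨hρK, hdis, hun⟩ := hρ
  ext τ
  constructor
  · rintro ⟨⟨hτK, hστ, hστK⟩, hρτ, hρτK', hσρτ, hσρτK⟩
    refine ⟨hτK, ?_, ?_⟩
    · rw [Finset.union_inter_distrib_right, hστ, hρτ, Finset.union_empty]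
    · rw [Finset.union_assoc]; exact hσρτK
  · rintro ⟨hτK, hdis2, hunK⟩
    rw [Finset.union_inter_distrib_right, Finset.union_eq_empty] at hdis2
    obtain ⟨hστ, hρτ⟩ := hdis2
    rw [Finset.union_assoc] at hunK
    refine ⟨⟨hτK, hστ, hK _ hunK _ (Finset.union_subset_union_right Finset.subset_union_right)⟩,
      hρτ, hK _ hunK _ Finset.subset_union_right, ?_, hunK⟩
    rw [Finset.inter_union_distrib_left, hdis, hστ, Finset.union_empty]

lemma exists_hasDim {K : Set (Finset V)} (hne : K.Nonempty) {B : ℤ}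
    (hb : ∀ τ ∈ K, (τ.card : ℤ) ≤ B) : ∃ m : ℤ, HasDim K m ∧ m + 1 ≤ B := by
  set S : Set ℕ := {c | ∃ τ ∈ K, τ.card = c} with hS
  obtain ⟨τ₀, hτ₀⟩ := hne
  have hSne : S.Nonempty := ⟨τ₀.card, τ₀, hτ₀, rfl⟩
  have hSbdd : BddAbove S := by
    refine ⟨B.toNat, ?_⟩
    rintro c ⟨τ, hτ, rfl⟩
    have := hb τ hτ
    omega
  obtain ⟨τ, hτK, hτc⟩ := Nat.sSup_mem hSne hSbdd
  refine ⟨((sSup S : ℕ) : ℤ) - 1, ⟨?_, τ, hτK, by omega⟩, ?_⟩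
  · intro σ hσ
    have : σ.card ≤ sSup S := le_csSup hSbdd ⟨σ, hσ, rfl⟩
    omega
  · have := hb τ hτK
    omega

lemma exists_maxFace {K : Set (Finset V)} {B : ℤ}
    (hb : ∀ τ ∈ K, (τ.card : ℤ) ≤ B) {σ : Finset V} (hσ : σ ∈ K) :
    ∃ τ : Finset V, IsMaxFace K τ ∧ σ ⊆ τ := by
  set S : Set ℕ := {c | ∃ τ ∈ K, σ ⊆ τ ∧ τ.card = c} with hS
  have hSne : S.Nonempty := ⟨σ.card, σ, hσ, subset_refl σ, rfl⟩
  have hSbdd : BddAbove S := by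
    refine ⟨B.toNat, ?_⟩
    rintro c ⟨τ, hτ, _, rfl⟩
    have := hb τ hτ
    omega
  obtain ⟨τ, hτK, hστ, hτc⟩ := Nat.sSup_mem hSne hSbdd
  refine ⟨τ, ⟨hτK, ?_⟩, hστ⟩
  intro θ hθ hτθ
  have hθS : θ.card ≤ sSup S := le_csSup hSbdd ⟨θ, hθ, hστ.trans hτθ, rfl⟩
  exact (Finset.eq_of_subset_of_card_le hτθ (by omega)).symm

lemma scp_self {K : Set (Finset V)} {σ : Finset V} (hσ : IsMaxFace K σ) :
    StronglyConnectedPair K σ σ :=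
  ⟨0, fun _ => σ, fun _ => hσ, rfl, rfl, fun i => i.elim0⟩

lemma finChain_to_RTG {α : Type*} (P : α → α → Prop) :
    ∀ (q : ℕ) (δ : Fin (q + 1) → α), (∀ i : Fin q, P (δ i.castSucc) (δ i.succ)) →
      Relation.ReflTransGen P (δ 0) (δ (Fin.last q)) := by
  intro q
  induction q with
  | zero => intro δ _; exact Relation.ReflTransGen.refl
  | succ q ih =>
    intro δ h
    have h1 := ih (fun j => δ j.castSucc) (fun i => by
      have := h i.castSucc
      rwa [Fin.succ_castSucc] at this)
    have h2 := h (Fin.last q)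
    rw [Fin.succ_last] at h2
    simp only [Fin.castSucc_zero] at h1
    exact h1.tail h2

lemma rtg_to_scp {K : Set (Finset V)} {σ τ : Finset V}
    (h : Relation.ReflTransGen (Rrel K) σ τ) (hσ : IsMaxFace K σ)
    (hall : ∀ θ : Finset V, IsMaxFace K θ → θ.card = σ.card) :
    StronglyConnectedPair K σ τ := by
  suffices hc : ∃ q : ℕ, ∃ δ : Fin (q + 1) → Finset V,
      (∀ i, IsMaxFace K (δ i)) ∧ δ 0 = σ ∧ δ (Fin.last q) = τ ∧
      ∀ i : Fin q, (δ i.castSucc ∩ δ i.succ).card + 1 = σ.card by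
    obtain ⟨q, δ, hmax, h0, hl, hcond⟩ := hc
    refine ⟨q, δ, hmax, h0, hl, fun i => ?_⟩
    have hsup : Finset.univ.sup (fun j : Fin (q + 1) => (δ j).card) = σ.card := by
      refine le_antisymm (Finset.sup_le fun j _ => (hall _ (hmax j)).le) ?_
      exact le_trans (le_of_eq (hall _ (hmax 0)).symm)
        (Finset.le_sup (f := fun j : Fin (q + 1) => (δ j).card) (Finset.mem_univ 0))
    rw [hsup]
    exact hcond i
  induction h with
  | refl => exact ⟨0, fun _ => σ, fun _ => hσ, rfl, rfl, fun i => i.elim0⟩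
  | @tail τ' τ hστ' hR ih =>
    obtain ⟨q, δ, hmax, h0, hl, hcond⟩ := ih
    refine ⟨q + 1, Fin.snoc δ τ, ?_, ?_, ?_, ?_⟩
    · intro i
      refine Fin.lastCases ?_ ?_ i
      · rw [Fin.snoc_last]; exact hR.2.1
      · intro j; rw [Fin.snoc_castSucc]; exact hmax j
    · rw [← Fin.castSucc_zero, Fin.snoc_castSucc]; exact h0
    · exact Fin.snoc_last _ _
    · intro i
      refine Fin.lastCases ?_ ?_ i
      · rw [Fin.succ_last, Fin.snoc_last, Fin.snoc_castSucc, hl]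
        have := hR.2.2.2
        have hcard : τ'.card = σ.card := hall _ hR.1
        omega
      · intro j
        rw [Fin.succ_castSucc, Fin.snoc_castSucc, Fin.snoc_castSucc]
        exact hcond j

end Aux

section Base

variable {V : Type*} [DecidableEq V]

lemma base_case {K : Set (Finset V)} {n : ℤ} (hK : IsComplex K) (hd : HasDim K n)
    (hn : n ≤ 0) : IsPure K n ∧ StronglyConnected K := by
  obtain ⟨hb, σ₀, hσ₀, hc₀⟩ := hd
  have hge : (0 : ℤ) ≤ n + 1 := by
    rw [← hc₀]; exact Int.natCast_nonneg _
  rcases (by omega : n = -1 ∨ n = 0) with rfl | rfl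
  · -- n = -1 : K = {∅}
    have hempty : ∀ τ ∈ K, τ = ∅ := by
      intro τ hτ
      have := hb τ hτ
      rw [← Finset.card_eq_zero]
      omega
    have hpure : IsPure K (-1) := by
      intro σ hσ
      rw [hempty σ hσ.1]
      simp
    refine ⟨hpure, fun σ τ hσ hτ => ?_⟩
    rw [hempty τ hτ.1, ← hempty σ hσ.1]
    exact scp_self hσ
  · -- n = 0
    have hcard : ∀ σ : Finset V, IsMaxFace K σ → σ.card = 1 := by
      intro σ hσ
      have h1 := hb σ hσ.1
      have h2 : σ ≠ ∅ := by
        intro h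
        have := hσ.2 σ₀ hσ₀ (h ▸ Finset.empty_subset σ₀)
        rw [this, h] at hc₀
        simp at hc₀
      have := Finset.card_pos.mpr (Finset.nonempty_iff_ne_empty.mpr h2)
      omega
    refine ⟨fun σ hσ => by rw [hcard σ hσ]; norm_num, fun σ τ hσ hτ => ?_⟩
    by_cases heq : σ = τ
    · rw [heq]; exact scp_self hτ
    · refine ⟨1, ![σ, τ], ?_, rfl, rfl, ?_⟩
      · intro i; fin_cases i <;> assumption
      · intro i
        have hi : i = 0 := Fin.fin_one_eq_zero i
        subst hi
        have hint : σ ∩ τ = ∅ := by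
          obtain ⟨a, ha⟩ := Finset.card_eq_one.mp (hcard σ hσ)
          obtain ⟨b, hbb⟩ := Finset.card_eq_one.mp (hcard τ hτ)
          subst ha; subst hbb
          rw [Finset.singleton_inter_of_notMem]
          simp only [Finset.mem_singleton]
          intro h; exact heq (by rw [h])
        have hsup : Finset.univ.sup (fun j : Fin 2 => (![σ, τ] j).card) = 1 := by
          refine le_antisymm (Finset.sup_le fun j _ => ?_) ?_
          · fin_cases j <;> simp [hcard σ hσ, hcard τ hτ]
          · exact le_trans (le_of_eq (hcard σ hσ).symm)
              (Finset.le_sup (f := fun j : Fin 2 => (![σ, τ] j).card) (Finset.mem_univ 0))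
        rw [hsup]
        show (![σ, τ] 0 ∩ ![σ, τ] 1).card + 1 = 1
        simp [hint]

end Base

section Key2

variable {V : Type*} [DecidableEq V]

lemma key2 {K : Set (Finset V)} {n : ℤ} {d : ℕ} (hK : IsComplex K)
    (hb : ∀ σ ∈ K, (σ.card : ℤ) ≤ n + 1) (hn : n ≤ (d : ℤ))
    (hlink : ∀ σ ∈ K, (∃ τ ∈ sLink K σ, 2 ≤ τ.card) → SConnected (sLink K σ))
    (ih : ∀ (L : Set (Finset V)) (m : ℤ), IsComplex L → HasDim L m → m + 1 ≤ (d : ℤ) →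
      (∀ ρ ∈ L, (∃ τ ∈ sLink L ρ, 2 ≤ τ.card) → SConnected (sLink L ρ)) →
      IsPure L m ∧ StronglyConnected L)
    {σ τ : Finset V} (hσ : IsMaxFace K σ) (hτ : IsMaxFace K τ) {v : V}
    (hvσ : v ∈ σ) (hvτ : v ∈ τ) :
    σ.card = τ.card ∧ Relation.ReflTransGen (Rrel K) σ τ := by
  set L := sLink K {v} with hL
  have hvK : ({v} : Finset V) ∈ K := hK σ hσ.1 {v} (Finset.singleton_subset_iff.mpr hvσ)
  have hLc : IsComplex L := link_isComplex hK {v}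
  have hLne : L.Nonempty := ⟨∅, hK σ hσ.1 ∅ (Finset.empty_subset σ),
    Finset.inter_empty _, by rwa [Finset.union_empty]⟩
  have hvnot : ∀ ρ ∈ L, v ∉ ρ := by
    rintro ρ ⟨_, hdis, _⟩ hv
    have : v ∈ ({v} : Finset V) ∩ ρ := Finset.mem_inter.mpr ⟨Finset.mem_singleton_self v, hv⟩
    rw [hdis] at this
    exact absurd this (Finset.notMem_empty v)
  have hLb : ∀ ρ ∈ L, (ρ.card : ℤ) ≤ n := by
    rintro ρ hρ
    obtain ⟨hρK, hdis, hun⟩ := hρ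
    have hcard : ({v} ∪ ρ).card = ρ.card + 1 := by
      rw [← Finset.insert_eq, Finset.card_insert_of_notMem (hvnot ρ ⟨hρK, hdis, hun⟩)]
    have := hb _ hun
    omega
  obtain ⟨m, hLdim, hm⟩ := exists_hasDim hLne hLb
  have hLlink : ∀ ρ ∈ L, (∃ τ' ∈ sLink L ρ, 2 ≤ τ'.card) → SConnected (sLink L ρ) := by
    intro ρ hρ hw
    rw [link_link hK hρ] at hw ⊢
    exact hlink _ hρ.2.2 hw
  obtain ⟨hLpure, hLsc⟩ := ih L m hLc hLdim (by omega) hLlink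
  -- facet correspondence
  have corr : ∀ ρ : Finset V, IsMaxFace K ρ → v ∈ ρ → IsMaxFace L (ρ.erase v) := by
    intro ρ hρ hv
    have hmem : ρ.erase v ∈ L := by
      refine ⟨hK ρ hρ.1 _ (Finset.erase_subset v ρ), ?_, ?_⟩
      · rw [Finset.singleton_inter_of_notMem (Finset.notMem_erase v ρ)]
      · rw [← Finset.insert_eq, Finset.insert_erase hv]
        exact hρ.1
    refine ⟨hmem, ?_⟩
    rintro ρ' ⟨hρ'K, hdis', hun'⟩ hsub
    have h1 : ρ ⊆ {v} ∪ ρ' := by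
      rw [← Finset.insert_erase hv, ← Finset.insert_eq]
      exact Finset.insert_subset_insert v hsub
    have h2 := hρ.2 _ hun' h1
    have hv' : v ∉ ρ' := hvnot ρ' ⟨hρ'K, hdis', hun'⟩
    apply Finset.Subset.antisymm
    · intro x hx
      have : x ∈ ρ := h2 ▸ Finset.mem_union_right _ hx
      exact Finset.mem_erase.mpr ⟨fun h => hv' (h ▸ hx), this⟩
    · exact hsub
  have corr' : ∀ ρ' : Finset V, IsMaxFace L ρ' → IsMaxFace K (insert v ρ') := by
    intro ρ' hρ'
    obtain ⟨⟨hρ'K, hdis', hun'⟩, hmax'⟩ := hρ'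
    rw [← Finset.insert_eq] at hun'
    refine ⟨hun', ?_⟩
    intro θ hθ hsubθ
    have hvθ : v ∈ θ := hsubθ (Finset.mem_insert_self v ρ')
    have hθL : θ.erase v ∈ L := by
      refine ⟨hK θ hθ _ (Finset.erase_subset v θ), ?_, ?_⟩
      · rw [Finset.singleton_inter_of_notMem (Finset.notMem_erase v θ)]
      · rw [← Finset.insert_eq, Finset.insert_erase hvθ]
        exact hθ
    have hv'' : v ∉ ρ' := hvnot ρ' ⟨hρ'K, hdis', (Finset.insert_eq v ρ').symm ▸ hun'⟩
    have hsub' : ρ' ⊆ θ.erase v := by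
      intro x hx
      exact Finset.mem_erase.mpr ⟨fun h => hv'' (h ▸ hx), hsubθ (Finset.mem_insert_of_mem hx)⟩
    have := hmax' _ hθL hsub'
    rw [← Finset.insert_erase hvθ, this]
  have hσL := corr σ hσ hvσ
  have hτL := corr τ hτ hvτ
  have hcardσ : (σ.erase v).card + 1 = σ.card := by
    rw [Finset.card_erase_of_mem hvσ]
    have : 0 < σ.card := Finset.card_pos.mpr ⟨v, hvσ⟩
    omega
  have hcardτ : (τ.erase v).card + 1 = τ.card := by
    rw [Finset.card_erase_of_mem hvτ]
    have : 0 < τ.card := Finset.card_pos.mpr ⟨v, hvτ⟩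
    omega
  have hpσ := hLpure _ hσL
  have hpτ := hLpure _ hτL
  constructor
  · omega
  · -- build the chain
    obtain ⟨q, δ', hδ'max, hδ'0, hδ'last, hδ'cond⟩ := hLsc _ _ hσL hτL
    have hc' : ∀ j, (δ' j).card = (σ.erase v).card := by
      intro j
      have := hLpure _ (hδ'max j)
      omega
    have hsup : (Finset.univ.sup fun j : Fin (q + 1) => (δ' j).card) = (σ.erase v).card := by
      refine le_antisymm (Finset.sup_le fun j _ => (hc' j).le) ?_
      exact le_trans (le_of_eq (hc' 0).symm)
        (Finset.le_sup (f := fun j : Fin (q + 1) => (δ' j).card) (Finset.mem_univ 0))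
    have hRchain : ∀ i : Fin q, Rrel K (insert v (δ' i.castSucc)) (insert v (δ' i.succ)) := by
      intro i
      have hv1 : v ∉ δ' i.castSucc := hvnot _ (hδ'max i.castSucc).1
      have hv2 : v ∉ δ' i.succ := hvnot _ (hδ'max i.succ).1
      have hint : insert v (δ' i.castSucc) ∩ insert v (δ' i.succ)
          = insert v (δ' i.castSucc ∩ δ' i.succ) := by
        rw [Finset.insert_inter_of_mem (Finset.mem_insert_self v _),
          Finset.inter_insert_of_notMem hv1]
      have hcond := hδ'cond i
      rw [hsup] at hcond
      refine ⟨corr' _ (hδ'max i.castSucc), corr' _ (hδ'max i.succ), ?_, ?_⟩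
      · rw [Finset.card_insert_of_notMem hv1, Finset.card_insert_of_notMem hv2,
          hc' i.castSucc, hc' i.succ]
      · rw [hint, Finset.card_insert_of_notMem (fun h => hv1 (Finset.mem_inter.mp h).1),
          Finset.card_insert_of_notMem hv1]
        have := hc' i.castSucc
        omega
    have := finChain_to_RTG (Rrel K) q (fun j => insert v (δ' j)) hRchain
    simp only [hδ'0, hδ'last] at this
    rwa [Finset.insert_erase hvσ, Finset.insert_erase hvτ] at this

end Key2

section Main

variable {V : Type*} [DecidableEq V]

lemma main_aux : ∀ (d : ℕ) (K : Set (Finset V)) (n : ℤ), IsComplex K → HasDim K n →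
    n + 1 ≤ (d : ℤ) →
    (∀ σ ∈ K, (∃ τ ∈ sLink K σ, 2 ≤ τ.card) → SConnected (sLink K σ)) →
    IsPure K n ∧ StronglyConnected K := by
  intro d
  induction d with
  | zero =>
    intro K n hK hd hn _
    exact base_case hK hd (by omega)
  | succ d ih =>
    intro K n hK hd hn hlink
    by_cases hn0 : n ≤ 0
    · exact base_case hK hd hn0
    · push_neg at hn0
      obtain ⟨hb, σ₀, hσ₀K, hσ₀c⟩ := hd
      have hσ₀card : 2 ≤ σ₀.card := by omega
      have hemptyK : (∅ : Finset V) ∈ K := hK σ₀ hσ₀K ∅ (Finset.empty_subset σ₀)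
      have hlinkEmpty : sLink K ∅ = K := by
        ext τ
        simp [sLink]
      have hconn : SConnected K := by
        have := hlink ∅ hemptyK (by rw [hlinkEmpty]; exact ⟨σ₀, hσ₀K, hσ₀card⟩)
        rwa [hlinkEmpty] at this
      -- every edge/simplex extends to a facet
      have hkey2 : ∀ σ τ : Finset V, IsMaxFace K σ → IsMaxFace K τ → ∀ v : V,
          v ∈ σ → v ∈ τ → σ.card = τ.card ∧ Relation.ReflTransGen (Rrel K) σ τ :=
        fun σ τ hσ hτ v hvσ hvτ =>
          key2 hK hb (by omega) hlink (fun L m hLc hLd hLm hLl => ih L m hLc hLd hLm hLl)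
            hσ hτ hvσ hvτ
      -- walking along vertex paths
      have key4 : ∀ (m : ℕ) (p : Fin (m + 1) → V),
          (∀ i : Fin m, ({p i.castSucc, p i.succ} : Finset V) ∈ K) →
          ∀ σ τ : Finset V, IsMaxFace K σ → IsMaxFace K τ → p 0 ∈ σ → p (Fin.last m) ∈ τ →
          σ.card = τ.card ∧ Relation.ReflTransGen (Rrel K) σ τ := by
        intro m
        induction m with
        | zero =>
          intro p _ σ τ hσ hτ h0 hl
          exact hkey2 σ τ hσ hτ (p 0) h0 hl
        | succ m ihm =>
          intro p hp σ τ hσ hτ h0 hl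
          have hedge : ({p 0, p 1} : Finset V) ∈ K := by
            have := hp 0
            simpa using this
          obtain ⟨ρ, hρ, hsubρ⟩ := exists_maxFace hb hedge
          have h0ρ : p 0 ∈ ρ := hsubρ (by simp)
          have h1ρ : p 1 ∈ ρ := hsubρ (by simp)
          have t1 := hkey2 σ ρ hσ hρ (p 0) h0 h0ρ
          have t2 := ihm (fun j => p j.succ) (fun i => by
              have := hp i.succ
              rwa [← Fin.succ_castSucc] at this)
            ρ τ hρ hτ (by simpa using h1ρ) (by simpa only [Fin.succ_last] using hl)
          exact ⟨t1.1.trans t2.1, t1.2.trans t2.2⟩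
      obtain ⟨σ₁, hσ₁, hσ₀₁⟩ := exists_maxFace hb hσ₀K
      have hσ₁c : (σ₁.card : ℤ) = n + 1 := by
        have h1 := hb σ₁ hσ₁.1
        have h2 := Finset.card_le_card hσ₀₁
        omega
      have hfne : ∀ σ : Finset V, IsMaxFace K σ → σ.Nonempty := by
        intro σ hσ
        rw [Finset.nonempty_iff_ne_empty]
        rintro rfl
        have := hσ.2 σ₁ hσ₁.1 (Finset.empty_subset σ₁)
        rw [this] at hσ₁c
        simp at hσ₁c
        omega
      have hcards : ∀ σ τ : Finset V, IsMaxFace K σ → IsMaxFace K τ →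
          σ.card = τ.card ∧ Relation.ReflTransGen (Rrel K) σ τ := by
        intro σ τ hσ hτ
        obtain ⟨u, hu⟩ := hfne σ hσ
        obtain ⟨w, hw⟩ := hfne τ hτ
        have huK : ({u} : Finset V) ∈ K := hK σ hσ.1 {u} (Finset.singleton_subset_iff.mpr hu)
        have hwK : ({w} : Finset V) ∈ K := hK τ hτ.1 {w} (Finset.singleton_subset_iff.mpr hw)
        obtain ⟨m, p, hp0, hpl, hpe⟩ := hconn.2 u w huK hwK
        exact key4 m p hpe σ τ hσ hτ (hp0 ▸ hu) (hpl ▸ hw)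
      have hpure : IsPure K n := by
        intro σ hσ
        have := (hcards σ σ₁ hσ hσ₁).1
        omega
      refine ⟨hpure, ?_⟩
      intro σ τ hσ hτ
      refine rtg_to_scp (hcards σ τ hσ hτ).2 hσ ?_
      intro θ hθ
      have h1 := hpure θ hθ
      have h2 := hpure σ hσ
      omega

end Main


/-- Björner: if every link of dimension at least 1 (including the
link of the empty simplex, i.e. the complex itself) is connected, then the
complex is pure and strongly connected. -/
theorem statement14 {V : Type*} [DecidableEq V] (K : Set (Finset V)) (n : ℤ)
    (hK : IsComplex K) (hd : HasDim K n)
    (hlink : ∀ σ ∈ K, (∃ τ ∈ sLink K σ, 2 ≤ τ.card) → SConnected (sLink K σ)) :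
    IsPure K n ∧ StronglyConnected K := by
  exact main_aux (n + 1).toNat K n hK hd (by omega) hlink
end

section
/- Let Σ₁ and Σ₂ be nonempty finite-dimensional simplicial complexes on disjoint vertex sets. Then the join Σ₁ ∗ Σ₂ is strongly connected if and only if Σ₁ and Σ₂ are both strongly connected. -/
open SimpCx

namespace Statement16Aux

open SimpCx

variable {V : Type*} [DecidableEq V]

/-- Adjacency relation on maximal faces: equal cardinality, intersection one less. -/
def Adj (K : Set (Finset V)) (σ τ : Finset V) : Prop :=
  IsMaxFace K σ ∧ IsMaxFace K τ ∧ τ.card = σ.card ∧ (σ ∩ τ).card + 1 = σ.card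

lemma rtg_of_path {α : Type*} {R : α → α → Prop} :
    ∀ q (δ : Fin (q + 1) → α), (∀ i : Fin q, R (δ i.castSucc) (δ i.succ)) →
      Relation.ReflTransGen R (δ 0) (δ (Fin.last q)) := by
  intro q
  induction q with
  | zero =>
    intro δ _
    have : (Fin.last 0) = (0 : Fin 1) := rfl
    rw [this]
  | succ q ih =>
    intro δ h
    have h1 := ih (fun i => δ i.succ) (fun i => by
      have := h i.succ
      simpa only [Fin.succ_castSucc] using this)
    have h0 : R (δ 0) (δ (0 : Fin (q + 1)).succ) := by
      have := h 0
      simpa using this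
    have hlast : δ ((Fin.last q).succ) = δ (Fin.last (q + 1)) := by rw [Fin.succ_last]
    rw [hlast] at h1
    exact Relation.ReflTransGen.head h0 h1

lemma rtg_eqOr {α : Type*} {r : α → α → Prop} {a b : α}
    (h : Relation.ReflTransGen (fun x y => x = y ∨ r x y) a b) :
    Relation.ReflTransGen r a b := by
  induction h with
  | refl => exact .refl
  | tail _ hstep ih =>
    rcases hstep with rfl | hstep
    · exact ih
    · exact ih.tail hstep

/-- From a reflexive-transitive chain of adjacencies, build a normalized chain. -/
lemma chain_aux {K : Set (Finset V)} {σ τ : Finset V} (hσ : IsMaxFace K σ)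
    (h : Relation.ReflTransGen (Adj K) σ τ) :
    ∃ q : ℕ, ∃ δ : Fin (q + 1) → Finset V,
      (∀ i, IsMaxFace K (δ i)) ∧ δ 0 = σ ∧ δ (Fin.last q) = τ ∧
      (∀ j, (δ j).card = σ.card) ∧
      ∀ i : Fin q, (δ i.castSucc ∩ δ i.succ).card + 1 = σ.card := by
  induction h with
  | refl => exact ⟨0, fun _ => σ, fun _ => hσ, rfl, rfl, fun _ => rfl, fun i => i.elim0⟩
  | @tail b c hab hbc ih =>
    obtain ⟨q, δ, hmax, h0, hlast, hcard, hstep⟩ := ih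
    refine ⟨q + 1, Fin.snoc δ c, ?_, ?_, ?_, ?_, ?_⟩
    · intro i
      induction i using Fin.lastCases with
      | last => rw [Fin.snoc_last]; exact hbc.2.1
      | cast j => rw [Fin.snoc_castSucc]; exact hmax j
    · have : (0 : Fin (q + 2)) = (0 : Fin (q + 1)).castSucc := rfl
      rw [this, Fin.snoc_castSucc]; exact h0
    · rw [Fin.snoc_last]
    · intro j
      induction j using Fin.lastCases with
      | last =>
        rw [Fin.snoc_last]
        have h1 : (δ (Fin.last q)).card = σ.card := hcard _
        rw [hlast] at h1
        rw [hbc.2.2.1, h1]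
      | cast j => rw [Fin.snoc_castSucc]; exact hcard j
    · intro i
      induction i using Fin.lastCases with
      | last =>
        have e1 : ((Fin.last q : Fin (q + 1)).castSucc : Fin (q + 2))
            = (Fin.last q).castSucc := rfl
        have e2 : ((Fin.last q : Fin (q + 1)).succ : Fin (q + 2)) = Fin.last (q + 1) :=
          Fin.succ_last _
        rw [e2, Fin.snoc_last, Fin.snoc_castSucc]
        have h1 : (δ (Fin.last q)).card = σ.card := hcard _
        rw [hlast] at h1
        rw [hlast]
        exact hbc.2.2.2.trans h1
      | cast j =>
        have e2 : ((j.castSucc : Fin (q + 1)).succ : Fin (q + 2)) = j.succ.castSucc := by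
          rw [Fin.succ_castSucc]
        rw [e2]
        have e1 : ((j.castSucc : Fin (q + 1)).castSucc : Fin (q + 2)) = j.castSucc.castSucc := rfl
        rw [e1, Fin.snoc_castSucc, Fin.snoc_castSucc]
        exact hstep j

lemma scp_of_rtg {K : Set (Finset V)} {σ τ : Finset V} (hσ : IsMaxFace K σ)
    (h : Relation.ReflTransGen (Adj K) σ τ) : StronglyConnectedPair K σ τ := by
  obtain ⟨q, δ, hmax, h0, hlast, hcard, hstep⟩ := chain_aux hσ h
  refine ⟨q, δ, hmax, h0, hlast, fun i => ?_⟩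
  have hsup : Finset.univ.sup (fun j : Fin (q + 1) => (δ j).card) = σ.card := by
    have he : (fun j : Fin (q + 1) => (δ j).card) = fun _ => σ.card := funext hcard
    rw [he, Finset.sup_const Finset.univ_nonempty]
  rw [hsup]
  exact hstep i

/-- In a strongly-connecting chain, all members have the maximal cardinality. -/
lemma scp_chain {K : Set (Finset V)} {σ τ : Finset V} (h : StronglyConnectedPair K σ τ) :
    ∃ q : ℕ, ∃ δ : Fin (q + 1) → Finset V,
      (∀ i, IsMaxFace K (δ i)) ∧ δ 0 = σ ∧ δ (Fin.last q) = τ ∧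
      (∀ j, (δ j).card = σ.card) ∧
      ∀ i : Fin q, (δ i.castSucc ∩ δ i.succ).card + 1 = σ.card := by
  obtain ⟨q, δ, hmax, h0, hlast, hstep⟩ := h
  set M := Finset.univ.sup (fun j : Fin (q + 1) => (δ j).card) with hM
  have hle : ∀ j, (δ j).card ≤ M := fun j =>
    Finset.le_sup (f := fun j : Fin (q + 1) => (δ j).card) (Finset.mem_univ j)
  have step : ∀ i : Fin q, (δ i.castSucc).card = M ↔ (δ i.succ).card = M := by
    intro i
    have hi := hstep i
    constructor
    · intro ha
      by_contra hb
      have hb' : (δ i.succ).card < M := lt_of_le_of_ne (hle _) hb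
      have h1 : (δ i.succ).card ≤ (δ i.castSucc ∩ δ i.succ).card := by omega
      have h2 : δ i.castSucc ∩ δ i.succ = δ i.succ :=
        Finset.eq_of_subset_of_card_le Finset.inter_subset_right h1
      have h3 : δ i.succ ⊆ δ i.castSucc := by
        rw [← h2]; exact Finset.inter_subset_left
      have h4 := (hmax i.succ).2 _ (hmax i.castSucc).1 h3
      rw [h4] at ha
      omega
    · intro hb
      by_contra ha
      have ha' : (δ i.castSucc).card < M := lt_of_le_of_ne (hle _) ha
      have h1 : (δ i.castSucc).card ≤ (δ i.castSucc ∩ δ i.succ).card := by omega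
      have h2 : δ i.castSucc ∩ δ i.succ = δ i.castSucc :=
        Finset.eq_of_subset_of_card_le Finset.inter_subset_left h1
      have h3 : δ i.castSucc ⊆ δ i.succ := by
        rw [← h2]; exact Finset.inter_subset_right
      have h4 := (hmax i.castSucc).2 _ (hmax i.succ).1 h3
      rw [h4] at hb
      omega
  have key : ∀ j, ((δ j).card = M ↔ (δ 0).card = M) := by
    intro j
    induction j using Fin.induction with
    | zero => exact Iff.rfl
    | succ i ih => exact (step i).symm.trans ih
  obtain ⟨j₀, -, hj₀⟩ :=
    Finset.exists_mem_eq_sup Finset.univ Finset.univ_nonempty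
      (fun j : Fin (q + 1) => (δ j).card)
  have h00 : (δ 0).card = M := (key j₀).mp hj₀.symm
  have hall : ∀ j, (δ j).card = M := fun j => (key j).mpr h00
  have hσM : σ.card = M := by rw [← h0]; exact hall 0
  exact ⟨q, δ, hmax, h0, hlast, fun j => by rw [hall j, hσM],
    fun i => by rw [hσM]; exact hstep i⟩

lemma rtg_of_scp {K : Set (Finset V)} {σ τ : Finset V} (h : StronglyConnectedPair K σ τ) :
    Relation.ReflTransGen (Adj K) σ τ := by
  obtain ⟨q, δ, hmax, h0, hlast, hcard, hstep⟩ := scp_chain h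
  have hadj : ∀ i : Fin q, Adj K (δ i.castSucc) (δ i.succ) := fun i =>
    ⟨hmax _, hmax _, by rw [hcard, hcard], by rw [hcard]; exact hstep i⟩
  have := rtg_of_path (R := Adj K) q δ hadj
  rwa [h0, hlast] at this

section Join

variable {K L : Set (Finset V)}

omit [DecidableEq V] in
lemma vert_mem (hK : IsComplex K) {σ : Finset V} (hσ : σ ∈ K) {v : V} (hv : v ∈ σ) :
    ({v} : Finset V) ∈ K :=
  hK σ hσ {v} (Finset.singleton_subset_iff.mpr hv)

lemma disj_KL (hK : IsComplex K) (hL : IsComplex L)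
    (hdisj : ∀ v : V, ({v} : Finset V) ∈ K → ({v} : Finset V) ∉ L)
    {σ τ : Finset V} (hσ : σ ∈ K) (hτ : τ ∈ L) : Disjoint σ τ :=
  Finset.disjoint_left.mpr fun {v} hv hv' => hdisj v (vert_mem hK hσ hv) (vert_mem hL hτ hv')

lemma decomp_unique (hK : IsComplex K) (hL : IsComplex L)
    (hdisj : ∀ v : V, ({v} : Finset V) ∈ K → ({v} : Finset V) ∉ L)
    {σ σ' τ τ' : Finset V} (hσ : σ ∈ K) (hσ' : σ' ∈ K) (hτ : τ ∈ L) (hτ' : τ' ∈ L)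
    (h : σ ∪ τ = σ' ∪ τ') : σ = σ' ∧ τ = τ' := by
  constructor
  · apply Finset.Subset.antisymm
    · intro v hv
      have : v ∈ σ' ∪ τ' := h ▸ Finset.mem_union_left τ hv
      rcases Finset.mem_union.mp this with h' | h'
      · exact h'
      · exact absurd (vert_mem hL hτ' h') (hdisj v (vert_mem hK hσ hv))
    · intro v hv
      have : v ∈ σ ∪ τ := h.symm ▸ Finset.mem_union_left τ' hv
      rcases Finset.mem_union.mp this with h' | h'
      · exact h'
      · exact absurd (vert_mem hL hτ h') (hdisj v (vert_mem hK hσ' hv))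
  · apply Finset.Subset.antisymm
    · intro v hv
      have : v ∈ σ' ∪ τ' := h ▸ Finset.mem_union_right σ hv
      rcases Finset.mem_union.mp this with h' | h'
      · exact absurd (vert_mem hL hτ hv) (hdisj v (vert_mem hK hσ' h'))
      · exact h'
    · intro v hv
      have : v ∈ σ ∪ τ := h.symm ▸ Finset.mem_union_right σ' hv
      rcases Finset.mem_union.mp this with h' | h'
      · exact absurd (vert_mem hL hτ' hv) (hdisj v (vert_mem hK hσ h'))
      · exact h'

lemma maxFace_join_of (hK : IsComplex K) (hL : IsComplex L)
    (hdisj : ∀ v : V, ({v} : Finset V) ∈ K → ({v} : Finset V) ∉ L)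
    {σ τ : Finset V} (hσ : IsMaxFace K σ) (hτ : IsMaxFace L τ) :
    IsMaxFace (sJoin K L) (σ ∪ τ) := by
  refine ⟨⟨σ, hσ.1, τ, hτ.1, rfl⟩, ?_⟩
  rintro ρ ⟨σ', hσ', τ', hτ', rfl⟩ hsub
  have h1 : σ ⊆ σ' := by
    intro v hv
    rcases Finset.mem_union.mp (hsub (Finset.mem_union_left τ hv)) with h' | h'
    · exact h'
    · exact absurd (vert_mem hL hτ' h') (hdisj v (vert_mem hK hσ.1 hv))
  have h2 : τ ⊆ τ' := by
    intro v hv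
    rcases Finset.mem_union.mp (hsub (Finset.mem_union_right σ hv)) with h' | h'
    · exact absurd (vert_mem hL hτ.1 hv) (hdisj v (vert_mem hK hσ' h'))
    · exact h'
  rw [hσ.2 σ' hσ' h1, hτ.2 τ' hτ' h2]

lemma maxFace_join_decomp (hK : IsComplex K) (hL : IsComplex L)
    (hdisj : ∀ v : V, ({v} : Finset V) ∈ K → ({v} : Finset V) ∉ L)
    {ρ : Finset V} (hρ : IsMaxFace (sJoin K L) ρ) :
    ∃ σ τ : Finset V, IsMaxFace K σ ∧ IsMaxFace L τ ∧ ρ = σ ∪ τ := by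
  obtain ⟨σ, hσ, τ, hτ, rfl⟩ := hρ.1
  refine ⟨σ, τ, ⟨hσ, ?_⟩, ⟨hτ, ?_⟩, rfl⟩
  · intro σ' hσ' hsub
    have hmem : σ' ∪ τ ∈ sJoin K L := ⟨σ', hσ', τ, hτ, rfl⟩
    have := hρ.2 _ hmem (Finset.union_subset_union_left hsub)
    exact (decomp_unique hK hL hdisj hσ' hσ hτ hτ this).1
  · intro τ' hτ' hsub
    have hmem : σ ∪ τ' ∈ sJoin K L := ⟨σ, hσ, τ', hτ', rfl⟩
    have := hρ.2 _ hmem (Finset.union_subset_union_right hsub)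
    exact (decomp_unique hK hL hdisj hσ hσ hτ' hτ this).2

lemma sJoin_comm : sJoin K L = sJoin L K := by
  ext ρ
  constructor
  · rintro ⟨σ, hσ, τ, hτ, rfl⟩
    exact ⟨τ, hτ, σ, hσ, Finset.union_comm σ τ⟩
  · rintro ⟨τ, hτ, σ, hσ, rfl⟩
    exact ⟨σ, hσ, τ, hτ, Finset.union_comm τ σ⟩

end Join

lemma step_split (hK : IsComplex K) (hL : IsComplex L)
    (hdisj : ∀ v : V, ({v} : Finset V) ∈ K → ({v} : Finset V) ∉ L)
    {sa sb ta tb : Finset V} {M : ℕ}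
    (hsa : IsMaxFace K sa) (hsb : IsMaxFace K sb)
    (hta : IsMaxFace L ta) (htb : IsMaxFace L tb)
    (hca : (sa ∪ ta).card = M) (hcb : (sb ∪ tb).card = M)
    (hint : ((sa ∪ ta) ∩ (sb ∪ tb)).card + 1 = M) :
    (sa = sb ∨ Adj K sa sb) ∧ (ta = tb ∨ Adj L ta tb) := by
  have data : Disjoint sa ta := disj_KL hK hL hdisj hsa.1 hta.1
  have dbtb : Disjoint sb tb := disj_KL hK hL hdisj hsb.1 htb.1
  have datb : Disjoint sa tb := disj_KL hK hL hdisj hsa.1 htb.1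
  have dbta : Disjoint sb ta := disj_KL hK hL hdisj hsb.1 hta.1
  have hca' : sa.card + ta.card = M := by
    rw [← Finset.card_union_of_disjoint data]; exact hca
  have hcb' : sb.card + tb.card = M := by
    rw [← Finset.card_union_of_disjoint dbtb]; exact hcb
  have hinter : (sa ∪ ta) ∩ (sb ∪ tb) = (sa ∩ sb) ∪ (ta ∩ tb) := by
    ext v
    simp only [Finset.mem_inter, Finset.mem_union]
    constructor
    · rintro ⟨ha | ha, hb | hb⟩
      · exact Or.inl ⟨ha, hb⟩
      · exact (Finset.disjoint_left.mp datb ha hb).elim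
      · exact (Finset.disjoint_left.mp dbta hb ha).elim
      · exact Or.inr ⟨ha, hb⟩
    · rintro (⟨ha, hb⟩ | ⟨ha, hb⟩)
      · exact ⟨Or.inl ha, Or.inl hb⟩
      · exact ⟨Or.inr ha, Or.inr hb⟩
  have hdint : Disjoint (sa ∩ sb) (ta ∩ tb) :=
    (data.mono Finset.inter_subset_left Finset.inter_subset_left)
  have hxy : (sa ∩ sb).card + (ta ∩ tb).card + 1 = M := by
    rw [← Finset.card_union_of_disjoint hdint, ← hinter]; exact hint
  have hx1 : (sa ∩ sb).card ≤ sa.card := Finset.card_le_card Finset.inter_subset_left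
  have hy1 : (ta ∩ tb).card ≤ ta.card := Finset.card_le_card Finset.inter_subset_left
  have hx2 : (sa ∩ sb).card ≤ sb.card := Finset.card_le_card Finset.inter_subset_right
  have hy2 : (ta ∩ tb).card ≤ tb.card := Finset.card_le_card Finset.inter_subset_right
  by_cases hx : (sa ∩ sb).card = sa.card
  · have h1 : sa ∩ sb = sa :=
      Finset.eq_of_subset_of_card_le Finset.inter_subset_left (le_of_eq hx.symm)
    have hsub : sa ⊆ sb := by rw [← h1]; exact Finset.inter_subset_right
    have heq : sa = sb := (hsa.2 sb hsb.1 hsub).symm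
    have hcc : sa.card = sb.card := by rw [heq]
    refine ⟨Or.inl heq, Or.inr ⟨hta, htb, by omega, by omega⟩⟩
  · have hx' : (sa ∩ sb).card < sa.card := lt_of_le_of_ne hx1 hx
    have hy : (ta ∩ tb).card = ta.card := by omega
    have h1 : ta ∩ tb = ta :=
      Finset.eq_of_subset_of_card_le Finset.inter_subset_left (le_of_eq hy.symm)
    have hsub : ta ⊆ tb := by rw [← h1]; exact Finset.inter_subset_right
    have heq : ta = tb := (hta.2 tb htb.1 hsub).symm
    have hcc : ta.card = tb.card := by rw [heq]
    refine ⟨Or.inr ⟨hsa, hsb, by omega, by omega⟩, Or.inl heq⟩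

lemma maxFace_of_hasDim {n : ℤ} (hd : HasDim L n) : ∃ ρ : Finset V, IsMaxFace L ρ := by
  obtain ⟨hbound, ρ, hρ, hcard⟩ := hd
  refine ⟨ρ, hρ, fun τ hτ hsub => ?_⟩
  have h1 : (τ.card : ℤ) ≤ n + 1 := hbound τ hτ
  have h2 : τ.card ≤ ρ.card := by omega
  exact (Finset.eq_of_subset_of_card_le hsub h2).symm

lemma sc_factor_of_join (hK : IsComplex K) (hL : IsComplex L)
    (hdisj : ∀ v : V, ({v} : Finset V) ∈ K → ({v} : Finset V) ∉ L)
    (hLtop : ∃ ρ : Finset V, IsMaxFace L ρ)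
    (h : StronglyConnected (sJoin K L)) : StronglyConnected K := by
  obtain ⟨ρ, hρ⟩ := hLtop
  intro σ τ hσ hτ
  have h1 := h _ _ (maxFace_join_of hK hL hdisj hσ hρ) (maxFace_join_of hK hL hdisj hτ hρ)
  obtain ⟨q, δ, hmax, h0, hlast, hcard, hstep⟩ := scp_chain h1
  choose s t hs ht hst using fun i => maxFace_join_decomp hK hL hdisj (hmax i)
  have hs0 : s 0 = σ :=
    (decomp_unique hK hL hdisj (hs 0).1 hσ.1 (ht 0).1 hρ.1 (by rw [← hst 0, h0])).1
  have hsl : s (Fin.last q) = τ :=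
    (decomp_unique hK hL hdisj (hs _).1 hτ.1 (ht _).1 hρ.1 (by rw [← hst _, hlast])).1
  have hstep' : ∀ i : Fin q,
      s i.castSucc = s i.succ ∨ Adj K (s i.castSucc) (s i.succ) := by
    intro i
    refine (step_split hK hL hdisj (hs i.castSucc) (hs i.succ) (ht i.castSucc) (ht i.succ)
      (M := (σ ∪ ρ).card) ?_ ?_ ?_).1
    · rw [← hst i.castSucc]; exact hcard _
    · rw [← hst i.succ]; exact hcard _
    · rw [← hst i.castSucc, ← hst i.succ]; exact hstep i
  have hrtg := rtg_of_path (R := fun a b => a = b ∨ Adj K a b) q s hstep'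
  rw [hs0, hsl] at hrtg
  exact scp_of_rtg hσ (rtg_eqOr hrtg)

lemma join_sc_of_factors (hK : IsComplex K) (hL : IsComplex L)
    (hdisj : ∀ v : V, ({v} : Finset V) ∈ K → ({v} : Finset V) ∉ L)
    (hKs : StronglyConnected K) (hLs : StronglyConnected L) :
    StronglyConnected (sJoin K L) := by
  intro ρ ρ' hρ hρ'
  obtain ⟨σ, τ, hσ, hτ, rfl⟩ := maxFace_join_decomp hK hL hdisj hρ
  obtain ⟨σ', τ', hσ', hτ', rfl⟩ := maxFace_join_decomp hK hL hdisj hρ'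
  have hrK : Relation.ReflTransGen (Adj K) σ σ' := rtg_of_scp (hKs σ σ' hσ hσ')
  have hrL : Relation.ReflTransGen (Adj L) τ τ' := rtg_of_scp (hLs τ τ' hτ hτ')
  have lift1 : Relation.ReflTransGen (Adj (sJoin K L)) (σ ∪ τ) (σ' ∪ τ) := by
    refine Relation.ReflTransGen.lift (fun a => a ∪ τ) ?_ _ _ hrK
    rintro a b ⟨ha, hb, hcab, hiab⟩
    have da : Disjoint a τ := disj_KL hK hL hdisj ha.1 hτ.1
    have db : Disjoint b τ := disj_KL hK hL hdisj hb.1 hτ.1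
    refine ⟨maxFace_join_of hK hL hdisj ha hτ, maxFace_join_of hK hL hdisj hb hτ, ?_, ?_⟩
    · rw [Finset.card_union_of_disjoint da, Finset.card_union_of_disjoint db, hcab]
    · have hi : (a ∪ τ) ∩ (b ∪ τ) = (a ∩ b) ∪ τ := by
        ext v
        simp only [Finset.mem_inter, Finset.mem_union]
        tauto
      have hd : Disjoint (a ∩ b) τ := da.mono_left Finset.inter_subset_left
      rw [hi, Finset.card_union_of_disjoint hd, Finset.card_union_of_disjoint da]
      omega
  have lift2 : Relation.ReflTransGen (Adj (sJoin K L)) (σ' ∪ τ) (σ' ∪ τ') := by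
    refine Relation.ReflTransGen.lift (fun a => σ' ∪ a) ?_ _ _ hrL
    rintro a b ⟨ha, hb, hcab, hiab⟩
    have da : Disjoint σ' a := disj_KL hK hL hdisj hσ'.1 ha.1
    have db : Disjoint σ' b := disj_KL hK hL hdisj hσ'.1 hb.1
    refine ⟨maxFace_join_of hK hL hdisj hσ' ha, maxFace_join_of hK hL hdisj hσ' hb, ?_, ?_⟩
    · rw [Finset.card_union_of_disjoint da, Finset.card_union_of_disjoint db, hcab]
    · have hi : (σ' ∪ a) ∩ (σ' ∪ b) = σ' ∪ (a ∩ b) := by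
        ext v
        simp only [Finset.mem_inter, Finset.mem_union]
        tauto
      have hd : Disjoint σ' (a ∩ b) := da.mono_right Finset.inter_subset_left
      rw [hi, Finset.card_union_of_disjoint hd, Finset.card_union_of_disjoint da]
      omega
  exact scp_of_rtg (maxFace_join_of hK hL hdisj hσ hτ) (lift1.trans lift2)

end Statement16Aux

open Statement16Aux in
/-- a join is strongly connected iff both factors are. -/
theorem statement16 {V : Type*} [DecidableEq V] (K L : Set (Finset V)) (n₁ n₂ : ℤ)
    (hK : IsComplex K) (hL : IsComplex L)
    (hdisj : ∀ v : V, ({v} : Finset V) ∈ K → ({v} : Finset V) ∉ L)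
    (hK0 : K.Nonempty) (hL0 : L.Nonempty)
    (hdK : HasDim K n₁) (hdL : HasDim L n₂) :
    StronglyConnected (sJoin K L) ↔ StronglyConnected K ∧ StronglyConnected L := by
  have hdisj' : ∀ v : V, ({v} : Finset V) ∈ L → ({v} : Finset V) ∉ K :=
    fun v hv hv' => hdisj v hv' hv
  constructor
  · intro h
    refine ⟨sc_factor_of_join hK hL hdisj (maxFace_of_hasDim hdL) h, ?_⟩
    refine sc_factor_of_join hL hK hdisj' (maxFace_of_hasDim hdK) ?_
    rwa [sJoin_comm] at h
  · rintro ⟨hKs, hLs⟩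
    exact join_sc_of_factors hK hL hdisj hKs hLs
end

section
/- A nonempty simplicial complex Σ is a quasi-manifold (i.e. a quasi-n-manifold for n = dim Σ) if and only if Lk_Σ(σ) is a pseudomanifold for every simplex σ ∈ Σ, including σ = ∅ (for which Lk_Σ(∅) = Σ). -/
open SimpCx

namespace Stmt17

variable {V : Type*} [DecidableEq V]

lemma sLink_empty (K : Set (Finset V)) : sLink K ∅ = K := by
  ext τ
  simp [sLink]

lemma link_isComplex {K : Set (Finset V)} (hK : IsComplex K) (σ : Finset V) :
    IsComplex (sLink K σ) := by
  rintro τ ⟨hτK, hdisj, hcupK⟩ ρ hρτ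
  refine ⟨hK τ hτK ρ hρτ, ?_, hK (σ ∪ τ) hcupK (σ ∪ ρ) (Finset.union_subset_union_right hρτ)⟩
  have : σ ∩ ρ ⊆ σ ∩ τ := Finset.inter_subset_inter (le_refl σ) hρτ
  rw [hdisj] at this
  exact Finset.subset_empty.mp this

lemma link_locFin {K : Set (Finset V)} (hlf : SLocallyFinite K) (σ : Finset V) :
    SLocallyFinite (sLink K σ) := by
  intro v hv
  have h1 : ({v} : Finset V) ∈ K := hv.1
  exact (hlf v h1).subset (by rintro ρ ⟨⟨hρ, _, _⟩, hvρ⟩; exact ⟨hρ, hvρ⟩)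

/-- every simplex lies in a maximal face -/
lemma exists_maxFace {K : Set (Finset V)} (hK : IsComplex K) (hlf : SLocallyFinite K)
    {n : ℤ} (hd : HasDim K n) {σ : Finset V} (hσ : σ ∈ K) :
    ∃ τ : Finset V, IsMaxFace K τ ∧ σ ⊆ τ := by
  rcases eq_or_ne σ ∅ with rfl | hne
  · obtain ⟨ρ, hρ, hρc⟩ := hd.2
    refine ⟨ρ, ⟨hρ, ?_⟩, Finset.empty_subset _⟩
    intro τ hτ hsub
    have := hd.1 τ hτ
    exact (Finset.eq_of_subset_of_card_le hsub (by omega)).symm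
  · obtain ⟨v, hv⟩ := Finset.nonempty_iff_ne_empty.mpr hne
    have hvK : ({v} : Finset V) ∈ K := hK σ hσ {v} (Finset.singleton_subset_iff.mpr hv)
    have hfin : {ρ ∈ K | v ∈ ρ}.Finite := hlf v hvK
    have hfin2 : {ρ ∈ K | σ ⊆ ρ}.Finite :=
      hfin.subset (by rintro ρ ⟨hρ, hsub⟩; exact ⟨hρ, hsub hv⟩)
    -- pick element of maximal card
    obtain ⟨τ, hτ, hmax⟩ := Set.Finite.exists_maximalFor (fun ρ => ρ.card)
      {ρ ∈ K | σ ⊆ ρ} hfin2 ⟨σ, hσ, le_refl σ⟩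
    refine ⟨τ, ⟨hτ.1, ?_⟩, hτ.2⟩
    intro ρ hρ hsub
    have hρmem : ρ ∈ {ρ ∈ K | σ ⊆ ρ} := ⟨hρ, hτ.2.trans hsub⟩
    have := hmax hρmem (Finset.card_le_card hsub)
    exact (Finset.eq_of_subset_of_card_le hsub this.ge).symm

lemma card_union_of_link {σ τ : Finset V} (hdisj : σ ∩ τ = ∅) :
    (σ ∪ τ).card = σ.card + τ.card := by
  rw [Finset.card_union_of_disjoint (Finset.disjoint_iff_inter_eq_empty.mpr hdisj)]

lemma sdiff_mem_link {K : Set (Finset V)} (hK : IsComplex K) {σ ρ : Finset V}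
    (hρ : ρ ∈ K) (hsub : σ ⊆ ρ) : ρ \ σ ∈ sLink K σ := by
  refine ⟨hK ρ hρ _ (Finset.sdiff_subset), ?_, ?_⟩
  · simp [Finset.inter_sdiff_self]
  · rwa [Finset.union_sdiff_of_subset hsub]

lemma link_hasDim {K : Set (Finset V)} (hK : IsComplex K) (hlf : SLocallyFinite K)
    {n : ℤ} (hd : HasDim K n) (hp : IsPure K n) {σ : Finset V} (hσ : σ ∈ K) :
    HasDim (sLink K σ) (n - σ.card) := by
  constructor
  · rintro τ ⟨hτ, hdisj, hcup⟩
    have h1 := hd.1 _ hcup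
    have h2 := card_union_of_link hdisj
    push_cast at h1 ⊢
    omega
  · obtain ⟨ρ, ⟨hρ, hmax⟩, hsub⟩ := exists_maxFace hK hlf hd hσ
    have hcard : (ρ.card : ℤ) = n + 1 := hp ρ ⟨hρ, hmax⟩
    refine ⟨ρ \ σ, sdiff_mem_link hK hρ hsub, ?_⟩
    have := Finset.card_sdiff_of_subset hsub
    have := Finset.card_le_card hsub
    push_cast
    omega

lemma link_pure {K : Set (Finset V)} (hK : IsComplex K)
    {n : ℤ} (hp : IsPure K n) {σ : Finset V} (hσ : σ ∈ K) :
    IsPure (sLink K σ) (n - σ.card) := by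
  rintro τ ⟨⟨hτ, hdisj, hcup⟩, hmax⟩
  have hmaxK : IsMaxFace K (σ ∪ τ) := by
    refine ⟨hcup, ?_⟩
    intro ρ hρ hsub
    have hσρ : σ ⊆ ρ := (Finset.subset_union_left).trans hsub
    have h1 : ρ \ σ ∈ sLink K σ := sdiff_mem_link hK hρ hσρ
    have h2 : τ ⊆ ρ \ σ := by
      intro x hx
      refine Finset.mem_sdiff.mpr ⟨hsub (Finset.mem_union_right _ hx), ?_⟩
      intro hxσ
      have : x ∈ σ ∩ τ := Finset.mem_inter.mpr ⟨hxσ, hx⟩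
      simp [hdisj] at this
    have h3 := hmax _ h1 h2
    have : ρ = σ ∪ (ρ \ σ) := by rw [Finset.union_sdiff_of_subset hσρ]
    rw [this, h3]
  have hcard := hp _ hmaxK
  have h2 := card_union_of_link hdisj
  push_cast at hcard ⊢
  omega

lemma link_atMostTwo {K : Set (Finset V)} {n : ℤ}
    (hq : ∀ σ ∈ K, (σ.card : ℤ) = n →
      AtMostTwo {τ | τ ∈ K ∧ σ ⊆ τ ∧ (τ.card : ℤ) = n + 1}) {σ : Finset V} (hσ : σ ∈ K) :
    ∀ τ ∈ sLink K σ, (τ.card : ℤ) = n - σ.card →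
      AtMostTwo {ρ | ρ ∈ sLink K σ ∧ τ ⊆ ρ ∧ (ρ.card : ℤ) = (n - σ.card) + 1} := by
  rintro τ ⟨hτ, hdisj, hcup⟩ hcard
  have hcupcard : ((σ ∪ τ).card : ℤ) = n := by
    have := card_union_of_link hdisj; push_cast; omega
  have hAM := hq (σ ∪ τ) hcup hcupcard
  intro a ha b hb c hc
  have key : ∀ ρ, ρ ∈ {ρ | ρ ∈ sLink K σ ∧ τ ⊆ ρ ∧ (ρ.card : ℤ) = (n - σ.card) + 1} →
      σ ∪ ρ ∈ {ρ | ρ ∈ K ∧ σ ∪ τ ⊆ ρ ∧ (ρ.card : ℤ) = n + 1} := by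
    rintro ρ ⟨⟨hρ, hd2, hc2⟩, hsub, hc3⟩
    refine ⟨hc2, Finset.union_subset_union_right hsub, ?_⟩
    have := card_union_of_link hd2
    push_cast
    omega
  have inj : ∀ ρ ρ', ρ ∈ sLink K σ → ρ' ∈ sLink K σ → σ ∪ ρ = σ ∪ ρ' → ρ = ρ' := by
    rintro ρ ρ' ⟨_, hd2, _⟩ ⟨_, hd2', _⟩ h
    have e1 : (σ ∪ ρ) \ σ = ρ := by
      rw [Finset.union_sdiff_left, Finset.sdiff_eq_self_iff_disjoint]
      exact (Finset.disjoint_iff_inter_eq_empty.mpr hd2).symm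
    have e2 : (σ ∪ ρ') \ σ = ρ' := by
      rw [Finset.union_sdiff_left, Finset.sdiff_eq_self_iff_disjoint]
      exact (Finset.disjoint_iff_inter_eq_empty.mpr hd2').symm
    rw [← e1, ← e2, h]
  rcases hAM _ (key a ha) _ (key b hb) _ (key c hc) with h | h | h
  · exact Or.inl (inj a b ha.1 hb.1 h)
  · exact Or.inr (Or.inl (inj a c ha.1 hc.1 h))
  · exact Or.inr (Or.inr (inj b c hb.1 hc.1 h))

lemma link_link {K : Set (Finset V)} (hK : IsComplex K) {σ τ : Finset V}
    (hτ : τ ∈ sLink K σ) :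
    sLink (sLink K σ) τ = sLink K (σ ∪ τ) := by
  obtain ⟨hτK, hdisj, hcup⟩ := hτ
  ext ρ
  constructor
  · rintro ⟨⟨hρK, hd1, hc1⟩, hd2, ⟨hc2, hd3, hc3⟩⟩
    refine ⟨hρK, ?_, by rwa [← Finset.union_assoc] at hc3⟩
    rw [Finset.union_inter_distrib_right, hd1, hd2, Finset.union_empty]
  · rintro ⟨hρK, hd, hc⟩
    rw [Finset.union_inter_distrib_right, Finset.union_eq_empty] at hd
    rw [Finset.union_assoc] at hc
    refine ⟨⟨hρK, hd.1, hK _ hc _ (by intro x; simp; tauto)⟩, hd.2,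
      ⟨hK _ hc _ (by intro x; simp; tauto), ?_, hc⟩⟩
    rw [Finset.inter_union_distrib_left, hdisj, hd.1, Finset.union_empty]

lemma link_quasi {K : Set (Finset V)} {n : ℤ} (hq : IsQuasiManifold K n)
    {σ : Finset V} (hσ : σ ∈ K) :
    IsQuasiManifold (sLink K σ) (n - σ.card) := by
  obtain ⟨hK, hlf, hd, hp, h5, h6⟩ := hq
  refine ⟨link_isComplex hK σ, link_locFin hlf σ, link_hasDim hK hlf hd hp hσ,
    link_pure hK hp hσ, link_atMostTwo h5 hσ, ?_⟩
  intro τ hτ hex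
  rw [link_link hK hτ] at hex ⊢
  exact h6 (σ ∪ τ) hτ.2.2 hex

end Stmt17

namespace Stmt17

variable {V : Type*} [DecidableEq V]

/-- Chains of top simplices, indexed by ℕ. -/
def ChnN (L : Set (Finset V)) (m : ℤ) (s s' : Finset V) : Prop :=
  ∃ ℓ : ℕ, ∃ c : ℕ → Finset V, c 0 = s ∧ c ℓ = s' ∧
    (∀ i ≤ ℓ, c i ∈ L ∧ ((c i).card : ℤ) = m + 1) ∧
    ∀ i < ℓ, (((c i ∩ c (i+1)).card : ℤ)) = m

lemma chnN_single {L : Set (Finset V)} {m : ℤ} {s : Finset V}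
    (hs : s ∈ L) (hc : (s.card : ℤ) = m + 1) : ChnN L m s s :=
  ⟨0, fun _ => s, rfl, rfl, fun _ _ => ⟨hs, hc⟩, fun i hi => absurd hi (by omega)⟩

lemma chnN_trans {L : Set (Finset V)} {m : ℤ} {s t u : Finset V}
    (h1 : ChnN L m s t) (h2 : ChnN L m t u) : ChnN L m s u := by
  obtain ⟨a, c, hc0, hca, hcm, hce⟩ := h1
  obtain ⟨b, d, hd0, hdb, hdm, hde⟩ := h2
  refine ⟨a + b, fun i => if i ≤ a then c i else d (i - a), by simp [hc0], ?_, ?_, ?_⟩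
  · dsimp only
    by_cases hb : b = 0
    · simp only [hb, Nat.add_zero, le_refl, if_pos]
      rw [hca, ← hd0, ← hdb, hb]
    · rw [if_neg (by omega)]
      rwa [show a + b - a = b by omega]
  · intro i hi
    dsimp only
    by_cases h : i ≤ a
    · rw [if_pos h]; exact hcm i h
    · rw [if_neg h]; exact hdm (i - a) (by omega)
  · intro i hi
    dsimp only
    rcases lt_trichotomy i a with h | rfl | h
    · rw [if_pos (by omega : i ≤ a), if_pos (by omega : i + 1 ≤ a)]
      exact hce i h
    · rw [if_pos (le_refl i)]
      have hb : b ≠ 0 := by omega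
      rw [if_neg (by omega), show i + 1 - i = 1 by omega, hca, ← hd0]
      exact hde 0 (by omega)
    · rw [if_neg (by omega), if_neg (by omega), show i + 1 - a = (i - a) + 1 by omega]
      exact hde (i - a) (by omega)

/-- convert a ℕ-chain into the Fin-indexed form required by `IsPseudoManifold`. -/
lemma chnN_to_fin {L : Set (Finset V)} {m : ℤ} {s s' : Finset V} (h : ChnN L m s s') :
    ∃ q : ℕ, ∃ c : Fin (q + 1) → Finset V,
      c 0 = s ∧ c (Fin.last q) = s' ∧ (∀ i, c i ∈ L ∧ ((c i).card : ℤ) = m + 1) ∧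
      ∀ i : Fin q, ((c i.castSucc ∩ c i.succ).card : ℤ) = m := by
  obtain ⟨ℓ, c, hc0, hcl, hm, he⟩ := h
  refine ⟨ℓ, fun i => c i.val, by simpa using hc0, by simpa using hcl, ?_, ?_⟩
  · intro i; exact hm i.val (by omega)
  · intro i
    have := he i.val i.isLt
    simpa using this

/-- convert a Fin-indexed chain to a ℕ-chain. -/
lemma fin_to_chnN {L : Set (Finset V)} {m : ℤ} {s s' : Finset V}
    (h : ∃ q : ℕ, ∃ c : Fin (q + 1) → Finset V,
      c 0 = s ∧ c (Fin.last q) = s' ∧ (∀ i, c i ∈ L ∧ ((c i).card : ℤ) = m + 1) ∧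
      ∀ i : Fin q, ((c i.castSucc ∩ c i.succ).card : ℤ) = m) : ChnN L m s s' := by
  obtain ⟨q, c, hc0, hcl, hm, he⟩ := h
  refine ⟨q, fun i => c ⟨min i q, by omega⟩, ?_, ?_, ?_, ?_⟩
  · dsimp only; rw [← hc0]; congr 1
  · dsimp only; rw [← hcl]; congr 1; exact Fin.ext (by simp [Fin.last])
  · intro i _; exact hm _
  · intro i hi
    have := he ⟨i, hi⟩
    have e1 : c ⟨min i q, by omega⟩ = c ((⟨i, hi⟩ : Fin q).castSucc) := by
      congr 1; exact Fin.ext (by simp [Fin.castSucc, Fin.castAdd, Fin.castLE]; omega)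
    have e2 : c ⟨min (i+1) q, by omega⟩ = c ((⟨i, hi⟩ : Fin q).succ) := by
      congr 1; exact Fin.ext (by simp [Fin.succ]; omega)
    dsimp only
    rw [e1, e2]
    exact this

/-- convert a Fin-indexed vertex path (from `SConnected`) to a ℕ-indexed one. -/
lemma sconn_to_path {L : Set (Finset V)} (h : SConnected L) {u w : V}
    (hu : ({u} : Finset V) ∈ L) (hw : ({w} : Finset V) ∈ L) :
    ∃ ℓ : ℕ, ∃ p : ℕ → V, p 0 = u ∧ p ℓ = w ∧
      ∀ i < ℓ, ({p i, p (i+1)} : Finset V) ∈ L := by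
  obtain ⟨q, pf, h0, hl, he⟩ := h.2 u w hu hw
  refine ⟨q, fun i => pf ⟨min i q, by omega⟩, ?_, ?_, ?_⟩
  · dsimp only; rw [← h0]; congr 1
  · dsimp only; rw [← hl]; congr 1; exact Fin.ext (by simp [Fin.last])
  · intro i hi
    have := he ⟨i, hi⟩
    have e1 : pf ⟨min i q, by omega⟩ = pf ((⟨i, hi⟩ : Fin q).castSucc) := by
      congr 1; exact Fin.ext (by simp [Fin.castSucc, Fin.castAdd, Fin.castLE]; omega)
    have e2 : pf ⟨min (i+1) q, by omega⟩ = pf ((⟨i, hi⟩ : Fin q).succ) := by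
      congr 1; exact Fin.ext (by simp [Fin.succ]; omega)
    dsimp only
    rw [e1, e2]
    exact this

/-- convert a ℕ-indexed vertex path to the Fin-indexed form of `SConnected`. -/
lemma path_to_sconn {L : Set (Finset V)}
    {u w : V} {ℓ : ℕ} {p : ℕ → V} (h0 : p 0 = u) (hl : p ℓ = w)
    (he : ∀ i < ℓ, ({p i, p (i+1)} : Finset V) ∈ L) :
    ∃ m : ℕ, ∃ pf : Fin (m + 1) → V, pf 0 = u ∧ pf (Fin.last m) = w ∧
      ∀ i : Fin m, ({pf i.castSucc, pf i.succ} : Finset V) ∈ L := by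
  refine ⟨ℓ, fun i => p i.val, by simpa using h0, by simpa using hl, ?_⟩
  intro i
  have := he i.val i.isLt
  simpa using this

end Stmt17

namespace Stmt17

variable {V : Type*} [DecidableEq V]

lemma insert_sdiff_self {v : V} {t : Finset V} (hv : v ∈ t) :
    insert v (t \ {v}) = t := by
  ext x
  by_cases hx : x = v <;> simp [hx, hv]

lemma insert_inter_insert' (v : V) (a b : Finset V) :
    insert v a ∩ insert v b = insert v (a ∩ b) := by
  ext x
  by_cases hx : x = v <;> simp [hx]

/-- master induction: a quasi-m-manifold is strongly chained in top dimension. -/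
lemma quasi_chain : ∀ N : ℕ, ∀ (m : ℤ) (L : Set (Finset V)), m + 1 ≤ (N : ℤ) →
    IsQuasiManifold L m → ∀ s ∈ L, (s.card : ℤ) = m + 1 →
    ∀ s' ∈ L, (s'.card : ℤ) = m + 1 → ChnN L m s s' := by
  intro N
  induction N with
  | zero =>
    intro m L hN hq s hs hsc s' hs' hsc'
    have h1 : s = ∅ := Finset.card_eq_zero.mp (by omega)
    have h2 : s' = ∅ := Finset.card_eq_zero.mp (by omega)
    subst h1; subst h2
    exact chnN_single hs hsc
  | succ N IH =>
    intro m L hN hq s hs hsc s' hs' hsc'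
    rcases lt_or_ge m 1 with hm | hm
    · -- m ≤ 0 : trivial cases
      rcases lt_or_ge m 0 with hm0 | hm0
      · have h1 : s = ∅ := Finset.card_eq_zero.mp (by omega)
        have h2 : s' = ∅ := Finset.card_eq_zero.mp (by omega)
        subst h1; subst h2
        exact chnN_single hs hsc
      · have hm' : m = 0 := by omega
        subst hm'
        rcases eq_or_ne s s' with rfl | hne
        · exact chnN_single hs hsc
        · refine ⟨1, fun i => if i = 0 then s else s', by simp, by simp, ?_, ?_⟩
          · intro i _
            dsimp only
            by_cases h : i = 0 <;> simp [h, hs, hsc, hs', hsc']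
          · intro i hi
            have hi0 : i = 0 := by omega
            subst hi0
            simp only [if_pos rfl, if_neg (by omega : (1:ℕ) ≠ 0)]
            obtain ⟨a, ha⟩ := Finset.card_eq_one.mp (show s.card = 1 by omega)
            obtain ⟨b, hb⟩ := Finset.card_eq_one.mp (show s'.card = 1 by omega)
            have hab : a ≠ b := by rintro rfl; exact hne (ha.trans hb.symm)
            rw [ha, hb]
            simp [Finset.singleton_inter_of_notMem, hab]
    · -- m ≥ 1
      -- step A : two top simplices sharing a vertex are chained
      have stepA : ∀ t ∈ L, (t.card : ℤ) = m + 1 → ∀ t' ∈ L, (t'.card : ℤ) = m + 1 →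
          ∀ v, v ∈ t → v ∈ t' → ChnN L m t t' := by
        intro t ht htc t' ht' htc' v hv hv'
        have hvL : ({v} : Finset V) ∈ L := hq.1 t ht {v} (by simpa using hv)
        have hlq := link_quasi hq hvL
        simp only [Finset.card_singleton, Nat.cast_one] at hlq
        have hsub : ({v} : Finset V) ⊆ t := by simpa using hv
        have hsub' : ({v} : Finset V) ⊆ t' := by simpa using hv'
        have h1 : t \ {v} ∈ sLink L {v} := sdiff_mem_link hq.1 ht hsub
        have h1' : t' \ {v} ∈ sLink L {v} := sdiff_mem_link hq.1 ht' hsub'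
        have hcv : ({v} : Finset V).card = 1 := Finset.card_singleton v
        have hc1 : (t \ {v}).card = t.card - 1 := by rw [Finset.card_sdiff_of_subset hsub, hcv]
        have hc1' : (t' \ {v}).card = t'.card - 1 := by rw [Finset.card_sdiff_of_subset hsub', hcv]
        have hle : 1 ≤ t.card := Finset.card_le_card hsub |>.trans_eq' hcv.symm
        have hle' : 1 ≤ t'.card := Finset.card_le_card hsub' |>.trans_eq' hcv.symm
        have hch := IH (m - 1) (sLink L {v}) (by omega) hlq
          (t \ {v}) h1 (by omega) (t' \ {v}) h1' (by omega)
        obtain ⟨ℓ, c, hc0, hcl, hcm, hce⟩ := hch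
        have hvnot : ∀ i ≤ ℓ, v ∉ c i := by
          intro i hi hvi
          have := (hcm i hi).1.2.1
          have : v ∈ ({v} : Finset V) ∩ c i := by simp [hvi]
          rw [(hcm i hi).1.2.1] at this
          simp at this
        refine ⟨ℓ, fun i => insert v (c i), ?_, ?_, ?_, ?_⟩
        · dsimp only; rw [hc0, insert_sdiff_self hv]
        · dsimp only; rw [hcl, insert_sdiff_self hv']
        · intro i hi
          dsimp only
          constructor
          · have := (hcm i hi).1.2.2
            rwa [← Finset.insert_eq] at this
          · rw [Finset.card_insert_of_notMem (hvnot i hi)]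
            have := (hcm i hi).2
            push_cast
            omega
        · intro i hi
          dsimp only
          rw [insert_inter_insert']
          have hvn : v ∉ c i ∩ c (i + 1) := by
            intro h
            exact hvnot i (by omega) (Finset.mem_inter.mp h).1
          rw [Finset.card_insert_of_notMem hvn]
          have := hce i hi
          push_cast
          omega
      -- tops containing a given simplex
      have topOf : ∀ ρ ∈ L, ∃ t, t ∈ L ∧ (t.card : ℤ) = m + 1 ∧ ρ ⊆ t := by
        intro ρ hρ
        obtain ⟨t, hmax, hsub⟩ := exists_maxFace hq.1 hq.2.1 hq.2.2.1 hρ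
        exact ⟨t, hmax.1, hq.2.2.2.1 t hmax, hsub⟩
      -- walk along a vertex path
      have walk : ∀ ℓ : ℕ, ∀ p : ℕ → V, (∀ i < ℓ, ({p i, p (i+1)} : Finset V) ∈ L) →
          ∀ t, t ∈ L → (t.card : ℤ) = m + 1 → p 0 ∈ t →
          ∀ t', t' ∈ L → (t'.card : ℤ) = m + 1 → p ℓ ∈ t' → ChnN L m t t' := by
        intro ℓ
        induction ℓ with
        | zero =>
          intro p _ t ht htc h0 t' ht' htc' hl
          exact stepA t ht htc t' ht' htc' (p 0) h0 hl
        | succ ℓ ih =>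
          intro p hp t ht htc h0 t' ht' htc' hl
          obtain ⟨r, hr, hrc, hsub⟩ := topOf {p 0, p 1} (hp 0 (by omega))
          have c1 := stepA t ht htc r hr hrc (p 0) h0 (hsub (by simp))
          have c2 := ih (fun i => p (i+1)) (fun i hi => hp (i+1) (by omega)) r hr hrc
            (hsub (by simp)) t' ht' htc' hl
          exact chnN_trans c1 c2
      -- connectivity of L
      have hempty : ∅ ∈ L := hq.1 s hs ∅ (Finset.empty_subset _)
      have hconn : SConnected L := by
        have h6 := hq.2.2.2.2.2 ∅ hempty
        rw [sLink_empty] at h6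
        exact h6 ⟨s, hs, by omega⟩
      obtain ⟨u, hu⟩ := Finset.card_pos.mp (show 0 < s.card by omega)
      obtain ⟨w, hw⟩ := Finset.card_pos.mp (show 0 < s'.card by omega)
      have hu' : ({u} : Finset V) ∈ L := hq.1 s hs {u} (by simpa using hu)
      have hw' : ({w} : Finset V) ∈ L := hq.1 s' hs' {w} (by simpa using hw)
      obtain ⟨ℓ, p, h0, hl, he⟩ := sconn_to_path hconn hu' hw'
      exact walk ℓ p he s hs hsc (h0 ▸ hu) s' hs' hsc' (hl ▸ hw)

lemma quasi_isPseudo {L : Set (Finset V)} {m : ℤ} (hq : IsQuasiManifold L m) :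
    IsPseudoManifold L m := by
  obtain ⟨h1, h2, h3, h4, h5, h6⟩ := hq
  refine ⟨h1, h2, h3, h4, h5, ?_⟩
  intro s hs s' hs' hsc hsc'
  exact chnN_to_fin (quasi_chain (m+1).toNat m L (by omega)
    ⟨h1, h2, h3, h4, h5, h6⟩ s hs hsc s' hs' hsc')

lemma pm_sconnected {L : Set (Finset V)} {m : ℤ} (hp : IsPseudoManifold L m)
    (hex : ∃ τ ∈ L, 2 ≤ τ.card) : SConnected L := by
  classical
  obtain ⟨hKc, hlf, hd, hpure, h5, h6⟩ := hp
  have hm : 1 ≤ m := by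
    obtain ⟨τ, hτ, hτc⟩ := hex
    have := hd.1 τ hτ
    omega
  refine ⟨⟨(hd.2).choose, (hd.2).choose_spec.1⟩, ?_⟩
  intro u w hu hw
  have tops : ∀ v : V, ({v} : Finset V) ∈ L →
      ∃ t, t ∈ L ∧ (t.card : ℤ) = m + 1 ∧ v ∈ t := by
    intro v hv
    obtain ⟨t, hmax, hsub⟩ := exists_maxFace hKc hlf hd hv
    exact ⟨t, hmax.1, hpure t hmax, hsub (by simp)⟩
  obtain ⟨t, ht, htc, hut⟩ := tops u hu
  obtain ⟨t', ht', htc', hwt⟩ := tops w hw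
  have hch := fin_to_chnN (h6 t ht t' ht' htc htc')
  obtain ⟨ℓ, c, hc0, hcl, hcm, hce⟩ := hch
  have hxne : ∀ i < ℓ, (c i ∩ c (i+1)).Nonempty := by
    intro i hi
    rw [← Finset.card_pos]
    have := hce i hi
    omega
  set x : ℕ → V := fun i => if h : (c i ∩ c (i+1)).Nonempty then h.choose else u with hxdef
  have hx : ∀ i < ℓ, x i ∈ c i ∩ c (i+1) := by
    intro i hi
    have h := hxne i hi
    simp only [hxdef, dif_pos h]
    exact h.choose_spec
  set p : ℕ → V := fun i => if i = 0 then u else if ℓ + 1 ≤ i then w else x (i-1) with hpdef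
  have hp0 : p 0 = u := by simp [hpdef]
  have hpl : p (ℓ+1) = w := by
    simp only [hpdef]
    rw [if_neg (by omega), if_pos (by omega)]
  have hedge : ∀ i < ℓ + 1, ({p i, p (i+1)} : Finset V) ∈ L := by
    intro i hi
    have h1 : p i ∈ c i := by
      by_cases h0' : i = 0
      · subst h0'
        rw [hp0, hc0]
        exact hut
      · simp only [hpdef]
        rw [if_neg h0', if_neg (by omega)]
        have := (Finset.mem_inter.mp (hx (i-1) (by omega))).2
        rwa [show i - 1 + 1 = i by omega] at this
    have h2 : p (i+1) ∈ c i := by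
      by_cases hlast : i = ℓ
      · subst hlast
        rw [hpl, hcl]
        exact hwt
      · simp only [hpdef]
        rw [if_neg (by omega), if_neg (by omega)]
        have := (Finset.mem_inter.mp (hx i (by omega))).1
        simpa using this
    refine hKc (c i) (hcm i (by omega)).1 _ ?_
    intro y hy
    rcases Finset.mem_insert.mp hy with rfl | hy
    · exact h1
    · rw [Finset.mem_singleton.mp hy]; exact h2
  exact path_to_sconn hp0 hpl hedge

end Stmt17

/-- a nonempty complex is a quasi-manifold iff all of its links
(including the link of `∅`, which is the complex itself) are pseudomanifolds. -/
theorem statement17 {V : Type*} [DecidableEq V] (K : Set (Finset V))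
    (hK : IsComplex K) (hne : K.Nonempty) :
    (∃ n : ℤ, IsQuasiManifold K n) ↔
      ∀ σ ∈ K, ∃ m : ℤ, IsPseudoManifold (sLink K σ) m := by
  constructor
  · rintro ⟨n, hq⟩ σ hσ
    exact ⟨n - σ.card, Stmt17.quasi_isPseudo (Stmt17.link_quasi hq hσ)⟩
  · intro h
    have hem : (∅ : Finset V) ∈ K := by
      obtain ⟨τ, hτ⟩ := hne
      exact hK τ hτ ∅ (Finset.empty_subset _)
    obtain ⟨n, hpm⟩ := h ∅ hem
    rw [Stmt17.sLink_empty] at hpm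
    obtain ⟨h1, h2, h3, h4, h5, _⟩ := hpm
    refine ⟨n, h1, h2, h3, h4, h5, ?_⟩
    intro σ hσ hex
    obtain ⟨m, hpmσ⟩ := h σ hσ
    exact Stmt17.pm_sconnected hpmσ hex
end

section
/- A nonempty simplicial complex Σ is a quasi-manifold (i.e. a quasi-n-manifold for n = dim Σ) if and only if either Σ = {∅, {u}, {w}} for two distinct vertices u, w (the combinatorial 0-sphere), or Σ is connected and Lk_Σ(σ) is a finite quasi-manifold for every nonempty simplex σ ∈ Σ. -/
open SimpCx

namespace SimpCxAux
open SimpCx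
set_option linter.unusedSectionVars false
set_option linter.unusedVariables false

variable {V : Type*} [DecidableEq V]

lemma empty_mem' {K : Set (Finset V)} (hK : IsComplex K) (hne : K.Nonempty) :
    (∅ : Finset V) ∈ K := by
  obtain ⟨σ, hσ⟩ := hne; exact hK σ hσ ∅ (Finset.empty_subset σ)

lemma sLink_empty' (K : Set (Finset V)) : sLink K ∅ = K := by
  ext τ; simp [sLink]

lemma sLink_isComplex {K : Set (Finset V)} (hK : IsComplex K) (σ : Finset V) :
    IsComplex (sLink K σ) := by
  rintro τ ⟨hτ, hστ, hun⟩ τ' hsub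
  refine ⟨hK τ hτ τ' hsub, ?_, hK _ hun _ (Finset.union_subset_union_right hsub)⟩
  have : σ ∩ τ' ⊆ σ ∩ τ := Finset.inter_subset_inter (le_refl σ) hsub
  rw [hστ] at this
  exact Finset.subset_empty.mp this

lemma sLink_sLink {K : Set (Finset V)} (hK : IsComplex K) {σ τ : Finset V}
    (hdisj : σ ∩ τ = ∅) (hun : σ ∪ τ ∈ K) :
    sLink (sLink K σ) τ = sLink K (σ ∪ τ) := by
  ext ρ
  simp only [sLink, Set.mem_setOf_eq]
  constructor
  · rintro ⟨⟨h1, h2, h3⟩, h4, h5, h6, h7⟩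
    refine ⟨h1, ?_, by rwa [← Finset.union_assoc] at h7⟩
    rw [Finset.union_inter_distrib_right, h2, h4, Finset.union_empty]
  · rintro ⟨h1, h2, h3⟩
    have hσρ : σ ∩ ρ = ∅ := by
      apply Finset.subset_empty.mp; rw [← h2]
      exact Finset.inter_subset_inter (Finset.subset_union_left) (le_refl ρ)
    have hτρ : τ ∩ ρ = ∅ := by
      apply Finset.subset_empty.mp; rw [← h2]
      exact Finset.inter_subset_inter (Finset.subset_union_right) (le_refl ρ)
    refine ⟨⟨h1, hσρ, hK _ h3 _ ?_⟩, hτρ, ⟨hK _ h3 _ ?_, ?_, ?_⟩⟩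
    · rw [Finset.union_assoc]; exact Finset.union_subset_union_right Finset.subset_union_right
    · rw [Finset.union_assoc]; exact Finset.subset_union_right
    · rw [Finset.inter_union_distrib_left, hdisj, hσρ, Finset.union_empty]
    · rwa [← Finset.union_assoc]

lemma hasDim_unique {L : Set (Finset V)} {m m' : ℤ} (h : HasDim L m) (h' : HasDim L m') :
    m = m' := by
  obtain ⟨hub, σ, hσ, hc⟩ := h
  obtain ⟨hub', σ', hσ', hc'⟩ := h'
  have h1 := hub σ' hσ'
  have h2 := hub' σ hσ
  omega

lemma exists_maxFace {K : Set (Finset V)} (hK : IsComplex K) {σ : Finset V} (hσ : σ ∈ K)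
    (hfin : {ρ ∈ K | σ ⊆ ρ}.Finite) : ∃ ρ, IsMaxFace K ρ ∧ σ ⊆ ρ := by
  have hne : {ρ ∈ K | σ ⊆ ρ}.Nonempty := ⟨σ, hσ, Finset.Subset.refl σ⟩
  obtain ⟨ρ, hρ, hmax⟩ := Set.Finite.exists_maximalFor Finset.card _ hfin hne
  refine ⟨ρ, ⟨hρ.1, fun τ hτ hsub => ?_⟩, hρ.2⟩
  have hτm : τ ∈ {ρ ∈ K | σ ⊆ ρ} := ⟨hτ, hρ.2.trans hsub⟩
  have hc := hmax hτm (Finset.card_le_card hsub)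
  exact (Finset.eq_of_subset_of_card_le hsub hc).symm

lemma atMostTwo_of_injOn {α β : Type*} {S : Set α} {T : Set β} (f : α → β)
    (hmap : ∀ a ∈ S, f a ∈ T) (hinj : Set.InjOn f S) (h : AtMostTwo T) : AtMostTwo S := by
  intro a ha b hb c hc
  rcases h (f a) (hmap a ha) (f b) (hmap b hb) (f c) (hmap c hc) with h' | h' | h'
  · exact Or.inl (hinj ha hb h')
  · exact Or.inr (Or.inl (hinj ha hc h'))
  · exact Or.inr (Or.inr (hinj hb hc h'))

lemma quasi_singleton_empty : IsQuasiManifold ({∅} : Set (Finset V)) (-1) := by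
  refine ⟨?_, ?_, ⟨?_, ∅, rfl, by simp⟩, ?_, ?_, ?_⟩
  · rintro σ rfl τ hτ
    simpa using Finset.subset_empty.mp hτ
  · intro v hv
    simp at hv
  · rintro σ rfl
    simp
  · rintro σ ⟨hσ, _⟩
    rw [Set.mem_singleton_iff] at hσ
    simp [hσ]
  · rintro σ rfl h
    simp at h
  · rintro σ rfl ⟨τ, hτ, hc⟩
    rw [sLink_empty'] at hτ
    rw [Set.mem_singleton_iff] at hτ
    subst hτ
    simp at hc

lemma mem_sLink_sdiff {K : Set (Finset V)} (hK : IsComplex K) {σ ρ : Finset V}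
    (hρ : ρ ∈ K) (hsub : σ ⊆ ρ) : ρ \ σ ∈ sLink K σ := by
  refine ⟨hK ρ hρ _ (Finset.sdiff_subset), ?_, ?_⟩
  · exact Finset.inter_sdiff_self σ ρ
  · rwa [Finset.union_sdiff_of_subset hsub]

lemma star_finite {K : Set (Finset V)} (hK : IsComplex K) (hLF : SLocallyFinite K)
    {σ : Finset V} (hσ : σ ∈ K) (hσne : σ ≠ ∅) : {ρ ∈ K | σ ⊆ ρ}.Finite := by
  obtain ⟨v, hv⟩ := Finset.nonempty_iff_ne_empty.mpr hσne
  have hvK : ({v} : Finset V) ∈ K := hK σ hσ {v} (Finset.singleton_subset_iff.mpr hv)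
  exact (hLF v hvK).subset (fun ρ hρ => ⟨hρ.1, hρ.2 hv⟩)

lemma sLink_finite {K : Set (Finset V)} (hK : IsComplex K) (hLF : SLocallyFinite K)
    {σ : Finset V} (hσ : σ ∈ K) (hσne : σ ≠ ∅) : (sLink K σ).Finite := by
  have hstar := star_finite hK hLF hσ hσne
  refine ((hstar.image (fun ρ => ρ \ σ))).subset ?_
  rintro τ ⟨hτ, hd, hu⟩
  refine ⟨σ ∪ τ, ⟨hu, Finset.subset_union_left⟩, ?_⟩
  simp only
  rw [Finset.union_sdiff_cancel_left (Finset.disjoint_iff_inter_eq_empty.mpr hd)]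

lemma link_quasi {K : Set (Finset V)} {n : ℤ} (h : IsQuasiManifold K n) {σ : Finset V}
    (hσ : σ ∈ K) (hσne : σ ≠ ∅) :
    (sLink K σ).Finite ∧ IsQuasiManifold (sLink K σ) (n - σ.card) := by
  obtain ⟨hC, hLF, hD, hP, hA2, hLC⟩ := h
  have hfin : (sLink K σ).Finite := sLink_finite hC hLF hσ hσne
  have hdisj_card : ∀ τ ∈ sLink K σ, (σ ∪ τ).card = σ.card + τ.card := by
    rintro τ ⟨hτ, hd, hu⟩
    exact Finset.card_union_of_disjoint (Finset.disjoint_iff_inter_eq_empty.mpr hd)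
  -- maximal faces of the link correspond to maximal faces of K containing σ
  have hmaxcorr : ∀ τ : Finset V, IsMaxFace (sLink K σ) τ → IsMaxFace K (σ ∪ τ) := by
    rintro τ ⟨⟨hτ, hd, hu⟩, hmax⟩
    refine ⟨hu, fun ρ hρ hsub => ?_⟩
    have hρσ : σ ⊆ ρ := Finset.subset_union_left.trans hsub
    have hρ' : ρ \ σ ∈ sLink K σ := mem_sLink_sdiff hC hρ hρσ
    have hτρ : τ ⊆ ρ \ σ := by
      rw [Finset.subset_sdiff]
      exact ⟨Finset.subset_union_right.trans hsub,
        Finset.disjoint_iff_inter_eq_empty.mpr (by rwa [Finset.inter_comm] at hd)⟩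
    have := hmax _ hρ' hτρ
    rw [← Finset.union_sdiff_of_subset hρσ, this]
  refine ⟨hfin, sLink_isComplex hC σ, fun v _ => hfin.subset (fun ρ hρ => hρ.1), ?_, ?_, ?_, ?_⟩
  · -- HasDim
    constructor
    · rintro τ hτ
      have h1 := hD.1 _ hτ.2.2
      have h2 := hdisj_card τ hτ
      have h3 : σ.card ≠ 0 := by
        simpa [Finset.card_eq_zero] using hσne
      push_cast at h1 ⊢
      omega
    · obtain ⟨ρ, hρmax, hρsub⟩ := exists_maxFace hC hσ (star_finite hC hLF hσ hσne)
      refine ⟨ρ \ σ, mem_sLink_sdiff hC hρmax.1 hρsub, ?_⟩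
      have hc := hP ρ hρmax
      have := Finset.card_sdiff_of_subset hρsub
      have hub := Finset.card_le_card hρsub
      push_cast [this]
      omega
  · -- IsPure
    intro τ hτmax
    have h1 := hP _ (hmaxcorr τ hτmax)
    have h2 := hdisj_card τ hτmax.1
    push_cast at h1 ⊢
    omega
  · -- AtMostTwo
    intro τ hτ hcard
    have hστ : σ ∪ τ ∈ K := hτ.2.2
    have hστcard : ((σ ∪ τ).card : ℤ) = n := by
      have := hdisj_card τ hτ
      push_cast [this]
      omega
    have hAM := hA2 (σ ∪ τ) hστ hστcard
    refine atMostTwo_of_injOn (fun ρ => σ ∪ ρ) ?_ ?_ hAM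
    · rintro ρ ⟨⟨hρ, hd, hu⟩, hsub, hc⟩
      refine ⟨hu, Finset.union_subset_union_right hsub, ?_⟩
      have := Finset.card_union_of_disjoint (Finset.disjoint_iff_inter_eq_empty.mpr hd)
      push_cast [this]
      omega
    · rintro a ⟨⟨_, hda, _⟩, _, _⟩ b ⟨⟨_, hdb, _⟩, _, _⟩ hab
      have ha : (σ ∪ a) \ σ = a :=
        Finset.union_sdiff_cancel_left (Finset.disjoint_iff_inter_eq_empty.mpr hda)
      have hb : (σ ∪ b) \ σ = b :=
        Finset.union_sdiff_cancel_left (Finset.disjoint_iff_inter_eq_empty.mpr hdb)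
      rw [← ha, ← hb]
      simp only at hab
      rw [hab]
  · -- link connectivity
    rintro τ hτ hex
    rw [sLink_sLink hC hτ.2.1 hτ.2.2] at hex ⊢
    exact hLC _ hτ.2.2 hex
lemma path_prop {k : ℕ} (p : Fin (k + 1) → V) (Q : V → Prop) (h0 : Q (p 0))
    (hstep : ∀ i : Fin k, Q (p i.castSucc) → Q (p i.succ)) : Q (p (Fin.last k)) := by
  have key : ∀ j : ℕ, ∀ hj : j < k + 1, Q (p ⟨j, hj⟩) := by
    intro j
    induction j with
    | zero =>
      intro hj
      have e : (⟨0, hj⟩ : Fin (k + 1)) = 0 := by ext; simp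
      rw [e]; exact h0
    | succ j ih =>
      intro hj
      have hj' : j < k := Nat.succ_lt_succ_iff.mp hj
      have h1 := hstep ⟨j, hj'⟩
      have e1 : (Fin.castSucc ⟨j, hj'⟩ : Fin (k + 1)) = ⟨j, Nat.lt_succ_of_lt hj'⟩ := by
        ext; simp
      have e2 : (Fin.succ ⟨j, hj'⟩ : Fin (k + 1)) = ⟨j + 1, hj⟩ := by ext; simp
      rw [e1, e2] at h1
      exact h1 (ih _)
  exact key k (Nat.lt_succ_self k)

lemma singleton_mem_sLink {K : Set (Finset V)} (hK : IsComplex K) {u w : V} (huw : u ≠ w)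
    (he : ({u, w} : Finset V) ∈ K) : ({w} : Finset V) ∈ sLink K {u} := by
  refine ⟨hK _ he _ (by simp), ?_, ?_⟩
  · simp [Finset.singleton_inter_of_notMem, huw]
  · simpa using he

lemma edge_dim_eq {K : Set (Finset V)} (hK : IsComplex K) {u w : V}
    (he : ({u, w} : Finset V) ∈ K) {mu mw : ℤ}
    (hu : IsQuasiManifold (sLink K {u}) mu) (hw : IsQuasiManifold (sLink K {w}) mw) :
    mu = mw := by
  by_cases huw : u = w
  · subst huw
    exact hasDim_unique hu.2.2.1 hw.2.2.1
  · have h1 : ({w} : Finset V) ∈ sLink K {u} := singleton_mem_sLink hK huw he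
    have h2 : ({u} : Finset V) ∈ sLink K {w} :=
      singleton_mem_sLink hK (Ne.symm huw) (by rwa [Finset.pair_comm])
    have q1 := (link_quasi hu h1 (Finset.singleton_ne_empty w)).2
    have q2 := (link_quasi hw h2 (Finset.singleton_ne_empty u)).2
    rw [sLink_sLink hK h1.2.1 h1.2.2] at q1
    rw [sLink_sLink hK h2.2.1 h2.2.2] at q2
    have e : ({u} : Finset V) ∪ {w} = ({w} : Finset V) ∪ {u} := by
      rw [Finset.union_comm]
    rw [e] at q1
    have := hasDim_unique q1.2.2.1 q2.2.2.1
    simpa using this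
lemma quasi_sphere {u w : V} (huw : u ≠ w) :
    IsQuasiManifold ({∅, {u}, {w}} : Set (Finset V)) 0 := by
  have hfin : ({∅, {u}, {w}} : Set (Finset V)).Finite :=
    ((Set.finite_singleton ({w} : Finset V)).insert {u}).insert ∅
  have hcard : ∀ σ ∈ ({∅, {u}, {w}} : Set (Finset V)), σ.card ≤ 1 := by
    rintro σ (rfl | rfl | rfl) <;> simp
  refine ⟨?_, ?_, ⟨?_, {u}, by simp, by simp⟩, ?_, ?_, ?_⟩
  · rintro σ (rfl | rfl | rfl) τ hτ
    · left; exact Finset.subset_empty.mp hτ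
    · rcases Finset.subset_singleton_iff.mp hτ with rfl | rfl
      · left; rfl
      · right; left; rfl
    · rcases Finset.subset_singleton_iff.mp hτ with rfl | rfl
      · left; rfl
      · right; right; rfl
  · intro v _
    exact hfin.subset (fun σ hσ => hσ.1)
  · intro σ hσ
    have := hcard σ hσ
    push_cast; omega
  · rintro σ ⟨hσ, hmax⟩
    rcases hσ with rfl | rfl | rfl
    · exfalso
      have h1 := hmax {u} (by right; left; rfl) (Finset.empty_subset _)
      exact Finset.singleton_ne_empty u h1
    · simp
    · simp
  · intro σ hσ hc
    have hσe : σ = ∅ := by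
      have := hcard σ hσ
      have h0 : σ.card = 0 := by omega
      exact Finset.card_eq_zero.mp h0
    subst hσe
    have hmem : ∀ τ ∈ {τ | τ ∈ ({∅, {u}, {w}} : Set (Finset V)) ∧ ∅ ⊆ τ ∧ (τ.card : ℤ) = 0 + 1},
        τ = {u} ∨ τ = {w} := by
      rintro τ ⟨(rfl | rfl | rfl), _, hc1⟩
      · simp at hc1
      · left; rfl
      · right; rfl
    intro a ha b hb c hc
    rcases hmem a ha with rfl | rfl <;> rcases hmem b hb with rfl | rfl <;>
      rcases hmem c hc with rfl | rfl <;> tauto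
  · intro σ hσ hex
    exfalso
    obtain ⟨τ, hτ, hc⟩ := hex
    have := hcard τ hτ.1
    omega

lemma backward_main {K : Set (Finset V)} (hK : IsComplex K) (hne : K.Nonempty)
    (hconn : SConnected K)
    (hlinks : ∀ σ ∈ K, σ ≠ (∅ : Finset V) →
      (sLink K σ).Finite ∧ ∃ m : ℤ, IsQuasiManifold (sLink K σ) m) :
    ∃ n : ℤ, IsQuasiManifold K n := by
  by_cases hvert : ∃ v : V, ({v} : Finset V) ∈ K
  case neg =>
    have hKeq : K = {∅} := by
      apply Set.eq_singleton_iff_unique_mem.mpr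
      refine ⟨empty_mem' hK hne, fun σ hσ => ?_⟩
      by_contra hne'
      obtain ⟨v, hv⟩ := Finset.nonempty_iff_ne_empty.mpr hne'
      exact hvert ⟨v, hK σ hσ {v} (Finset.singleton_subset_iff.mpr hv)⟩
    exact ⟨-1, hKeq ▸ quasi_singleton_empty⟩
  case pos =>
  obtain ⟨v₀, hv₀⟩ := hvert
  obtain ⟨-, m₀, hQ₀⟩ := hlinks {v₀} hv₀ (Finset.singleton_ne_empty v₀)
  have Hv : ∀ v : V, ({v} : Finset V) ∈ K → IsQuasiManifold (sLink K {v}) m₀ := by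
    intro v hv
    obtain ⟨k, p, hp0, hpl, hpe⟩ := hconn.2 v₀ v hv₀ hv
    have key := path_prop p
      (fun x => ({x} : Finset V) ∈ K ∧ IsQuasiManifold (sLink K {x}) m₀)
      (by rw [hp0]; exact ⟨hv₀, hQ₀⟩)
      (by
        rintro i ⟨hu, hQu⟩
        have he := hpe i
        have hw : ({p i.succ} : Finset V) ∈ K := hK _ he _ (by simp)
        obtain ⟨-, m, hQw⟩ := hlinks _ hw (Finset.singleton_ne_empty _)
        have hm := edge_dim_eq hK he hQu hQw
        rw [← hm] at hQw
        exact ⟨hw, hQw⟩)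
    rw [hpl] at key
    exact key.2
  have hm₀ : -1 ≤ m₀ := by
    obtain ⟨σ, hσ, hc⟩ := hQ₀.2.2.1.2
    have : (0 : ℤ) ≤ (σ.card : ℤ) := Int.natCast_nonneg _
    omega
  refine ⟨m₀ + 1, hK, ?_, ?_, ?_, ?_, ?_⟩
  · -- SLocallyFinite
    intro v hv
    have hfin := (hlinks {v} hv (Finset.singleton_ne_empty v)).1
    refine (hfin.image (insert v)).subset ?_
    rintro σ ⟨hσ, hvσ⟩
    have hvsub : ({v} : Finset V) ⊆ σ := Finset.singleton_subset_iff.mpr hvσ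
    refine ⟨σ \ {v}, mem_sLink_sdiff hK hσ hvsub, ?_⟩
    show insert v (σ \ {v}) = σ
    rw [Finset.insert_eq, Finset.union_sdiff_of_subset hvsub]
  · -- HasDim
    constructor
    · intro σ hσ
      rcases eq_or_ne σ ∅ with rfl | hne'
      · simp; omega
      · obtain ⟨v, hv⟩ := Finset.nonempty_iff_ne_empty.mpr hne'
        have hvsub : ({v} : Finset V) ⊆ σ := Finset.singleton_subset_iff.mpr hv
        have hvK : ({v} : Finset V) ∈ K := hK σ hσ {v} hvsub
        have hmem := mem_sLink_sdiff hK hσ hvsub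
        have hub := (Hv v hvK).2.2.1.1 _ hmem
        have hcs : (σ \ {v}).card = σ.card - 1 := by
          rw [Finset.card_sdiff_of_subset hvsub, Finset.card_singleton]
        have hpos : 1 ≤ σ.card := Finset.card_pos.mpr ⟨v, hv⟩
        rw [hcs] at hub
        push_cast [Nat.cast_sub hpos] at hub ⊢
        omega
    · obtain ⟨τ, hτ, hc⟩ := (Hv v₀ hv₀).2.2.1.2
      refine ⟨{v₀} ∪ τ, hτ.2.2, ?_⟩
      have hd : Disjoint ({v₀} : Finset V) τ :=
        Finset.disjoint_iff_inter_eq_empty.mpr hτ.2.1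
      rw [Finset.card_union_of_disjoint hd, Finset.card_singleton]
      push_cast
      omega
  · -- IsPure
    rintro σ ⟨hσ, hmax⟩
    have hσne : σ ≠ ∅ := by
      rintro rfl
      have h1 := hmax {v₀} hv₀ (Finset.empty_subset _)
      exact Finset.singleton_ne_empty v₀ h1
    obtain ⟨v, hv⟩ := Finset.nonempty_iff_ne_empty.mpr hσne
    have hvsub : ({v} : Finset V) ⊆ σ := Finset.singleton_subset_iff.mpr hv
    have hvK : ({v} : Finset V) ∈ K := hK σ hσ {v} hvsub
    have hmem := mem_sLink_sdiff hK hσ hvsub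
    have hmax' : IsMaxFace (sLink K {v}) (σ \ {v}) := by
      refine ⟨hmem, fun ρ hρ hsub => ?_⟩
      have h1 : σ ⊆ {v} ∪ ρ := by
        rw [← Finset.union_sdiff_of_subset hvsub]
        exact Finset.union_subset_union_right hsub
      have h2 := hmax _ hρ.2.2 h1
      rw [← Finset.union_sdiff_cancel_left
        (Finset.disjoint_iff_inter_eq_empty.mpr hρ.2.1), h2]
    have hp := (Hv v hvK).2.2.2.1 _ hmax'
    have hcs : (σ \ {v}).card = σ.card - 1 := by
      rw [Finset.card_sdiff_of_subset hvsub, Finset.card_singleton]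
    have hpos : 1 ≤ σ.card := Finset.card_pos.mpr ⟨v, hv⟩
    rw [hcs] at hp
    push_cast [Nat.cast_sub hpos] at hp ⊢
    omega
  · -- AtMostTwo
    intro σ hσ hcard
    by_cases hm : m₀ = -1
    · -- at most one vertex
      have hone : ∀ a : V, ({a} : Finset V) ∈ K → a = v₀ := by
        intro a ha
        obtain ⟨k, p, hp0, hpl, hpe⟩ := hconn.2 v₀ a hv₀ ha
        have key := path_prop p (fun x => x = v₀)
          (by rw [hp0])
          (by
            intro i hx
            by_contra hne'
            have he := hpe i
            have huK : ({p i.castSucc} : Finset V) ∈ K := hK _ he _ (by simp)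
            have hmem : ({p i.succ} : Finset V) ∈ sLink K {p i.castSucc} :=
              singleton_mem_sLink hK (fun h => hne' (hx ▸ h ▸ rfl)) he
            have := (Hv _ huK).2.2.1.1 _ hmem
            rw [hm] at this
            simp at this)
        rw [hpl] at key
        exact key
      intro a ha b hb c hc
      left
      have hsing : ∀ τ ∈ {τ | τ ∈ K ∧ σ ⊆ τ ∧ (τ.card : ℤ) = m₀ + 1 + 1},
          τ = {v₀} := by
        rintro τ ⟨hτ, -, hc1⟩
        rw [hm] at hc1
        have : τ.card = 1 := by omega
        obtain ⟨x, rfl⟩ := Finset.card_eq_one.mp this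
        rw [hone x hτ]
      rw [hsing a ha, hsing b hb]
    · -- m₀ ≥ 0, σ nonempty
      have hσpos : 1 ≤ σ.card := by omega
      obtain ⟨v, hv⟩ := Finset.card_pos.mp hσpos
      have hvsub : ({v} : Finset V) ⊆ σ := Finset.singleton_subset_iff.mpr hv
      have hvK : ({v} : Finset V) ∈ K := hK σ hσ {v} hvsub
      have hmem := mem_sLink_sdiff hK hσ hvsub
      have hcσ : ((σ \ {v}).card : ℤ) = m₀ := by
        rw [Finset.card_sdiff_of_subset hvsub, Finset.card_singleton]
        push_cast [Nat.cast_sub hσpos]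
        omega
      have hAM := (Hv v hvK).2.2.2.2.1 _ hmem hcσ
      refine atMostTwo_of_injOn (fun τ => τ \ {v}) ?_ ?_ hAM
      · rintro τ ⟨hτ, hsub, hc1⟩
        have hvτ : ({v} : Finset V) ⊆ τ := hvsub.trans hsub
        have h1 : 1 ≤ τ.card := Finset.card_pos.mpr ⟨v, hvτ (Finset.mem_singleton_self v)⟩
        refine ⟨mem_sLink_sdiff hK hτ hvτ, Finset.sdiff_subset_sdiff hsub (le_refl _), ?_⟩
        rw [Finset.card_sdiff_of_subset hvτ, Finset.card_singleton]
        push_cast [Nat.cast_sub h1]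
        omega
      · rintro a ⟨haK, hsa, hca⟩ b ⟨hbK, hsb, hcb⟩ hab
        have hva : ({v} : Finset V) ⊆ a := hvsub.trans hsa
        have hvb : ({v} : Finset V) ⊆ b := hvsub.trans hsb
        have ea : {v} ∪ (a \ {v}) = a := Finset.union_sdiff_of_subset hva
        have eb : {v} ∪ (b \ {v}) = b := Finset.union_sdiff_of_subset hvb
        simp only at hab
        rw [← ea, ← eb, hab]
  · -- link connectivity
    intro σ hσ hex
    rcases eq_or_ne σ ∅ with rfl | hσne
    · rwa [sLink_empty']
    · obtain ⟨hfin, m, hQσ⟩ := hlinks σ hσ hσne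
      have hemp : (∅ : Finset V) ∈ sLink K σ :=
        ⟨empty_mem' hK hne, Finset.inter_empty σ, by rwa [Finset.union_empty]⟩
      have hcc := hQσ.2.2.2.2.2 ∅ hemp (by rwa [sLink_empty'])
      rwa [sLink_empty'] at hcc
end SimpCxAux

/-- a nonempty complex is a quasi-manifold iff it is the
combinatorial 0-sphere, or it is connected and all links of nonempty simplices
are finite quasi-manifolds. -/
theorem statement18 {V : Type*} [DecidableEq V] (K : Set (Finset V))
    (hK : IsComplex K) (hne : K.Nonempty) :
    (∃ n : ℤ, IsQuasiManifold K n) ↔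
      ((∃ u w : V, u ≠ w ∧ K = ({∅, {u}, {w}} : Set (Finset V))) ∨
        (SConnected K ∧ ∀ σ ∈ K, σ ≠ (∅ : Finset V) →
          (sLink K σ).Finite ∧ ∃ m : ℤ, IsQuasiManifold (sLink K σ) m)) := by
  constructor
  · rintro ⟨n, hQ⟩
    obtain ⟨hC, hLF, hD, hP, hA2, hLC⟩ := id hQ
    have hn1 : -1 ≤ n := by
      obtain ⟨σ, hσ, hc⟩ := hD.2
      have : (0 : ℤ) ≤ (σ.card : ℤ) := Int.natCast_nonneg _
      omega
    by_cases hn : 1 ≤ n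
    · right
      constructor
      · have hw : ∃ τ ∈ SimpCx.sLink K ∅, 2 ≤ τ.card := by
          obtain ⟨σ, hσ, hc⟩ := hD.2
          refine ⟨σ, by rwa [SimpCxAux.sLink_empty'], by omega⟩
        have := hLC ∅ (SimpCxAux.empty_mem' hK hne) hw
        rwa [SimpCxAux.sLink_empty'] at this
      · intro σ hσ hσne
        obtain ⟨hf, hq⟩ := SimpCxAux.link_quasi hQ hσ hσne
        exact ⟨hf, _, hq⟩
    · rcases (by omega : n = -1 ∨ n = 0) with rfl | rfl
      · right
        constructor
        · refine ⟨hne, fun u w hu _ => ?_⟩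
          have := hD.1 {u} hu
          simp at this
        · intro σ hσ hσne
          exfalso
          have h1 := hD.1 σ hσ
          have : σ.card = 0 := by omega
          exact hσne (Finset.card_eq_zero.mp this)
      · obtain ⟨σ₀, hσ₀, hc₀⟩ := hD.2
        have hc₀' : σ₀.card = 1 := by omega
        obtain ⟨u, rfl⟩ := Finset.card_eq_one.mp hc₀'
        have hAM := hA2 ∅ (SimpCxAux.empty_mem' hK hne) (by simp)
        by_cases htwo : ∃ w : V, ({w} : Finset V) ∈ K ∧ w ≠ u
        · left
          obtain ⟨w, hw, hwu⟩ := htwo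
          refine ⟨u, w, Ne.symm hwu, ?_⟩
          ext σ
          constructor
          · intro hσ
            have hc := hD.1 σ hσ
            rcases (by omega : σ.card = 0 ∨ σ.card = 1) with h0 | h1
            · left; exact Finset.card_eq_zero.mp h0
            · obtain ⟨x, rfl⟩ := Finset.card_eq_one.mp h1
              have hmem : ∀ y : V, ({y} : Finset V) ∈ K →
                  ({y} : Finset V) ∈ {τ | τ ∈ K ∧ ∅ ⊆ τ ∧ (τ.card : ℤ) = 0 + 1} :=
                fun y hy => ⟨hy, Finset.empty_subset _, by simp⟩
              rcases hAM {x} (hmem x hσ) {u} (hmem u hσ₀) {w} (hmem w hw) with h | h | h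
              · rw [Finset.singleton_inj] at h; simp [h]
              · rw [Finset.singleton_inj] at h; simp [h]
              · rw [Finset.singleton_inj] at h; exact absurd h.symm hwu
          · rintro (rfl | rfl | rfl)
            · exact SimpCxAux.empty_mem' hK hne
            · exact hσ₀
            · exact hw
        · right
          push_neg at htwo
          constructor
          · refine ⟨hne, fun a b ha hb => ?_⟩
            have ha' : a = u := htwo a ha
            have hb' : b = u := htwo b hb
            exact ⟨0, fun _ => u, ha'.symm, hb'.symm, fun i => i.elim0⟩
          · intro σ hσ hσne
            have hc := hD.1 σ hσ
            have h1 : σ.card = 1 := by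
              have h0 : σ.card ≠ 0 := fun h => hσne (Finset.card_eq_zero.mp h)
              omega
            obtain ⟨x, rfl⟩ := Finset.card_eq_one.mp h1
            have hx : x = u := htwo x hσ
            subst hx
            have hLk : SimpCx.sLink K {x} = {∅} := by
              apply Set.eq_singleton_iff_unique_mem.mpr
              constructor
              · exact ⟨SimpCxAux.empty_mem' hK hne, Finset.inter_empty _,
                  by rwa [Finset.union_empty]⟩
              · rintro τ ⟨hτ, hd, hu'⟩
                by_contra hτne
                obtain ⟨y, hy⟩ := Finset.nonempty_iff_ne_empty.mpr hτne
                have hyK : ({y} : Finset V) ∈ K :=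
                  hK τ hτ {y} (Finset.singleton_subset_iff.mpr hy)
                have hyx : y = x := htwo y hyK
                subst hyx
                have : y ∈ ({y} : Finset V) ∩ τ := Finset.mem_inter.mpr ⟨Finset.mem_singleton_self y, hy⟩
                rw [hd] at this
                simp at this
            rw [hLk]
            exact ⟨Set.finite_singleton _, -1, SimpCxAux.quasi_singleton_empty⟩
  · rintro (⟨u, w, huw, rfl⟩ | ⟨hconn, hlinks⟩)
    · exact ⟨0, SimpCxAux.quasi_sphere huw⟩
    · exact SimpCxAux.backward_main hK hne hconn hlinks
end

section
/- Every quasi-n-manifold is an n-pseudomanifold. -/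
open SimpCx

section Aux

variable {V : Type*} [DecidableEq V]

/-- Step relation between top simplices: intersection in codimension one. -/
def SStep (K : Set (Finset V)) (n : ℤ) (s t : Finset V) : Prop :=
  s ∈ K ∧ t ∈ K ∧ (s.card : ℤ) = n + 1 ∧ (t.card : ℤ) = n + 1 ∧ ((s ∩ t).card : ℤ) = n

lemma chain_of_rtg {K : Set (Finset V)} {n : ℤ} {s s' : Finset V}
    (hs : s ∈ K) (hcs : (s.card : ℤ) = n + 1)
    (h : Relation.ReflTransGen (SStep K n) s s') :
    ∃ m : ℕ, ∃ c : Fin (m + 1) → Finset V,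
      c 0 = s ∧ c (Fin.last m) = s' ∧ (∀ i, c i ∈ K ∧ ((c i).card : ℤ) = n + 1) ∧
      ∀ i : Fin m, ((c i.castSucc ∩ c i.succ).card : ℤ) = n := by
  induction h with
  | refl => exact ⟨0, fun _ => s, rfl, rfl, fun _ => ⟨hs, hcs⟩, fun i => i.elim0⟩
  | @tail b t hab hstep ih =>
    obtain ⟨m, c, h0, hlast, hmem, hint⟩ := ih
    refine ⟨m + 1, Fin.snoc c t, ?_, ?_, ?_, ?_⟩
    · have : (0 : Fin (m + 2)) = Fin.castSucc 0 := rfl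
      rw [this, Fin.snoc_castSucc, h0]
    · rw [Fin.snoc_last]
    · refine Fin.lastCases ?_ ?_
      · rw [Fin.snoc_last]; exact ⟨hstep.2.1, hstep.2.2.2.1⟩
      · intro j; rw [Fin.snoc_castSucc]; exact hmem j
    · refine Fin.lastCases ?_ ?_
      · rw [Fin.snoc_castSucc, Fin.succ_last, Fin.snoc_last, hlast]
        exact hstep.2.2.2.2
      · intro j
        rw [Fin.snoc_castSucc, Fin.succ_castSucc, Fin.snoc_castSucc]
        exact hint j

lemma exists_maxface {K : Set (Finset V)} (hK : IsComplex K) (hlf : SLocallyFinite K)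
    {ρ : Finset V} (hρ : ρ ∈ K) (hne : ρ.Nonempty) :
    ∃ t : Finset V, IsMaxFace K t ∧ ρ ⊆ t := by
  obtain ⟨v, hv⟩ := hne
  have hvK : ({v} : Finset V) ∈ K := hK ρ hρ {v} (Finset.singleton_subset_iff.2 hv)
  have hfin : {σ | σ ∈ K ∧ ρ ⊆ σ}.Finite :=
    (hlf v hvK).subset (fun σ hσ => ⟨hσ.1, hσ.2 hv⟩)
  obtain ⟨t, ⟨htK, htρ⟩, hmax⟩ :=
    Set.Finite.exists_maximalFor Finset.card _ hfin ⟨ρ, hρ, subset_refl ρ⟩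
  refine ⟨t, ⟨htK, ?_⟩, htρ⟩
  intro τ hτ hsub
  have h1 : t.card = τ.card :=
    le_antisymm (Finset.card_le_card hsub) (hmax ⟨hτ, htρ.trans hsub⟩ (Finset.card_le_card hsub))
  exact (Finset.eq_of_subset_of_card_le hsub h1.ge).symm

lemma key_chain {K : Set (Finset V)} {n : ℤ} (hcx : IsComplex K) (hlf : SLocallyFinite K)
    (hdim : HasDim K n) (hpure : IsPure K n)
    (hlink : ∀ σ ∈ K, (∃ τ ∈ sLink K σ, 2 ≤ τ.card) → SConnected (sLink K σ)) :
    ∀ d : ℕ, ∀ σ s s' : Finset V, σ ∈ K → s ∈ K → s' ∈ K →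
      (s.card : ℤ) = n + 1 → (s'.card : ℤ) = n + 1 → σ ⊆ s → σ ⊆ s' →
      n + 1 ≤ (σ.card : ℤ) + d → Relation.ReflTransGen (SStep K n) s s' := by
  intro d
  induction d with
  | zero =>
    intro σ s s' hσ hs hs' hcs hcs' hsub hsub' hb
    have h1 : σ = s := Finset.eq_of_subset_of_card_le hsub (by push_cast at hb ⊢; omega)
    have h2 : σ = s' := Finset.eq_of_subset_of_card_le hsub' (by push_cast at hb ⊢; omega)
    rw [← h1, ← h2]
  | succ d ih =>
    intro σ s s' hσ hs hs' hcs hcs' hsub hsub' hb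
    by_cases hle : n + 1 ≤ (σ.card : ℤ) + d
    · exact ih σ s s' hσ hs hs' hcs hcs' hsub hsub' hle
    have hσc : (σ.card : ℤ) + d = n := by push_cast at hb hle ⊢; omega
    rcases eq_or_ne s s' with rfl | hne
    · exact Relation.ReflTransGen.refl
    rcases Nat.eq_zero_or_pos d with rfl | hd
    · -- card σ = n, single step
      have hσss' : σ ⊆ s ∩ s' := Finset.subset_inter hsub hsub'
      have hnsub : s ∩ s' ≠ s := by
        intro he
        have hss' : s ⊆ s' := by rw [← he]; exact Finset.inter_subset_right
        exact hne (Finset.eq_of_subset_of_card_le hss' (by omega))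
      have hlt : (s ∩ s').card < s.card :=
        Finset.card_lt_card (Finset.inter_subset_left.ssubset_of_ne hnsub)
      have hge : σ.card ≤ (s ∩ s').card := Finset.card_le_card hσss'
      exact Relation.ReflTransGen.single
        ⟨hs, hs', hcs, hcs', by push_cast at hσc ⊢; omega⟩
    · -- card σ ≤ n - 1 : link argument
      have hσs : σ ≠ s := by
        intro he; rw [he] at hσc; omega
      have hσs' : σ ≠ s' := by
        intro he; rw [he] at hσc; omega
      obtain ⟨u, hus, huσ⟩ := Finset.exists_of_ssubset (hsub.ssubset_of_ne hσs)
      obtain ⟨w, hws, hwσ⟩ := Finset.exists_of_ssubset (hsub'.ssubset_of_ne hσs')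
      have hsdiff : s \ σ ∈ sLink K σ := by
        refine ⟨hcx s hs _ (Finset.sdiff_subset), Finset.inter_sdiff_self σ s, ?_⟩
        rw [Finset.union_sdiff_of_subset hsub]; exact hs
      have hsdc : 2 ≤ (s \ σ).card := by
        have h1 : (s \ σ).card = s.card - σ.card := Finset.card_sdiff_of_subset hsub
        have h2 : σ.card ≤ s.card := Finset.card_le_card hsub
        have : (s.card : ℤ) = n + 1 := hcs
        omega
      have hconn := hlink σ hσ ⟨s \ σ, hsdiff, hsdc⟩
      have hu : ({u} : Finset V) ∈ sLink K σ := by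
        refine ⟨hcx s hs _ (Finset.singleton_subset_iff.2 hus),
          Finset.inter_singleton_of_notMem huσ,
          hcx s hs _ (Finset.union_subset hsub (Finset.singleton_subset_iff.2 hus))⟩
      have hw : ({w} : Finset V) ∈ sLink K σ := by
        refine ⟨hcx s' hs' _ (Finset.singleton_subset_iff.2 hws),
          Finset.inter_singleton_of_notMem hwσ,
          hcx s' hs' _ (Finset.union_subset hsub' (Finset.singleton_subset_iff.2 hws))⟩
      obtain ⟨-, hpaths⟩ := hconn
      obtain ⟨m, p, hp0, hpl, hpe⟩ := hpaths u w hu hw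
      -- vertex not in σ helper
      have hnotσ : ∀ i : Fin m, p i.castSucc ∉ σ ∧ p i.succ ∉ σ := by
        intro i
        obtain ⟨-, hdisj, -⟩ := hpe i
        constructor
        · intro hmem
          have : p i.castSucc ∈ σ ∩ ({p i.castSucc, p i.succ} : Finset V) :=
            Finset.mem_inter.2 ⟨hmem, by simp⟩
          rw [hdisj] at this; exact absurd this (Finset.notMem_empty _)
        · intro hmem
          have : p i.succ ∈ σ ∩ ({p i.castSucc, p i.succ} : Finset V) :=
            Finset.mem_inter.2 ⟨hmem, by simp⟩
          rw [hdisj] at this; exact absurd this (Finset.notMem_empty _)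
      have claim : ∀ i : Fin (m + 1), ∀ t : Finset V, t ∈ K → (t.card : ℤ) = n + 1 →
          σ ∪ {p i} ⊆ t → Relation.ReflTransGen (SStep K n) s t := by
        refine Fin.induction ?_ ?_
        · intro t ht hct hsubt
          rw [hp0] at hsubt
          have hσu : σ ∪ {u} ∈ K :=
            hcx s hs _ (Finset.union_subset hsub (Finset.singleton_subset_iff.2 hus))
          have hcard : (σ ∪ {u}).card = σ.card + 1 := by
            rw [Finset.card_union_of_disjoint (Finset.disjoint_singleton_right.mpr huσ),
              Finset.card_singleton]
          refine ih (σ ∪ {u}) s t hσu hs ht hcs hct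
            (Finset.union_subset hsub (Finset.singleton_subset_iff.2 hus)) hsubt ?_
          rw [hcard]; push_cast; omega
        · intro i hihstep t ht hct hsubt
          by_cases hpp : p i.castSucc = p i.succ
          · exact hihstep t ht hct (by rw [hpp]; exact hsubt)
          obtain ⟨heK, hdisj, huK⟩ := hpe i
          have hne1 : (σ ∪ ({p i.castSucc, p i.succ} : Finset V)).Nonempty :=
            ⟨p i.castSucc, by simp⟩
          obtain ⟨t', htmax, hρt'⟩ := exists_maxface hcx hlf huK hne1
          have hct' : (t'.card : ℤ) = n + 1 := hpure t' htmax
          have h1 : σ ∪ {p i.castSucc} ⊆ t' := by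
            refine (Finset.union_subset_union_right ?_).trans hρt'
            simp
          have h2 : σ ∪ {p i.succ} ⊆ t' := by
            refine (Finset.union_subset_union_right ?_).trans hρt'
            simp
          have hst' := hihstep t' htmax.1 hct' h1
          have hσp : σ ∪ {p i.succ} ∈ K :=
            hcx _ huK _ (Finset.union_subset_union_right (by simp))
          have hcard : (σ ∪ {p i.succ}).card = σ.card + 1 := by
            rw [Finset.card_union_of_disjoint
              (Finset.disjoint_singleton_right.mpr (hnotσ i).2), Finset.card_singleton]
          have htt' := ih (σ ∪ {p i.succ}) t' t hσp htmax.1 ht hct' hct h2 hsubt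
            (by rw [hcard]; push_cast; omega)
          exact hst'.trans htt'
      refine claim (Fin.last m) s' hs' hcs' ?_
      rw [hpl]
      exact Finset.union_subset hsub' (Finset.singleton_subset_iff.2 hws)

end Aux

/-- every quasi-n-manifold is an n-pseudomanifold. -/
theorem statement19 {V : Type*} [DecidableEq V] (K : Set (Finset V)) (n : ℤ)
    (h : IsQuasiManifold K n) : IsPseudoManifold K n := by
  obtain ⟨hcx, hlf, hdim, hpure, h2, hlink⟩ := h
  refine ⟨hcx, hlf, hdim, hpure, h2, ?_⟩
  intro s hs s' hs' hcs hcs'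
  have hempty : (∅ : Finset V) ∈ K := hcx s hs ∅ (Finset.empty_subset s)
  have hR := key_chain hcx hlf hdim hpure hlink (n + 1).toNat ∅ s s' hempty hs hs'
    hcs hcs' (Finset.empty_subset s) (Finset.empty_subset s')
    (by simpa using Int.self_le_toNat (n + 1))
  exact chain_of_rtg hs hcs hR
end
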